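/- arXiv:2507.12406 — 8 statements merged into one kernel-verified Lean document; each statement's English description precedes it below -/
import Mathlib

section
/- Let a < b be real numbers and let Z = L¹((a,b),ℂ) be the Banach space of Lebesgue-integrable complex-valued functions on (a,b) with norm ‖g‖ = ∫_a^b |g(t)| dt, and let 𝒥 : Z → Z be the bounded linear operator sending g to the function x ↦ ∫_a^x g(t) dt. Then for every z ∈ ℂ with z ≠ 0, the operator z·id − 𝒥 : Z → Z has a bounded linear inverse, and this inverse satisfies ‖(z·id − 𝒥)^{-1}‖ ≤ (1/|z|)·exp((b−a)/|z|). -/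
/-!
Weighting by `(b - x)ᵏ / k!` and swapping the order of integration (Tonelli) shows that one
application of `𝒥` raises the weight by one, because `∫ₜᵇ (b - x)ᵏ / k! dx = (b - t)ᵏ⁺¹ / (k+1)!`.
Iterating from the constant weight `1` gives `‖𝒥ⁿ‖ ≤ (b - a)ⁿ / n!`, so the Neumann series
`∑ z⁻⁽ⁿ⁺¹⁾ 𝒥ⁿ` converges absolutely to `(z - 𝒥)⁻¹`, with norm at most `|z|⁻¹ exp ((b - a) / |z|)`.
-/

open MeasureTheory Set
open scoped ENNReal Nat

theorem exists_inverse_smul_one_sub_of_norm_pow_le {𝕜 R : Type*} [NormedField 𝕜] [NormedRing R]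
    [NormedAlgebra 𝕜 R] [CompleteSpace R] {x : R} {r : ℝ}
    (hx : ∀ n, ‖x ^ n‖ ≤ r ^ n / n !) {z : 𝕜} (hz : z ≠ 0) :
    ∃ T : R, T * (z • 1 - x) = 1 ∧ (z • 1 - x) * T = 1 ∧
      ‖T‖ ≤ ‖z‖⁻¹ * Real.exp (r / ‖z‖) := by
  set y := z⁻¹ • x
  have hy : ∀ n, ‖y ^ n‖ ≤ (r / ‖z‖) ^ n / n ! := fun n => by
    calc ‖y ^ n‖ = ‖z‖⁻¹ ^ n * ‖x ^ n‖ := by rw [smul_pow, norm_smul, norm_pow, norm_inv]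
      _ ≤ ‖z‖⁻¹ ^ n * (r ^ n / n !) := by gcongr; exact hx n
      _ = (r / ‖z‖) ^ n / n ! := by ring
  have hsum : Summable fun n => ‖y ^ n‖ :=
    .of_nonneg_of_le (fun _ => norm_nonneg _) hy (Real.summable_pow_div_factorial _)
  have hsplit : z • (1 : R) - x = z • (1 - y) := by
    rw [smul_sub, smul_inv_smul₀ hz]
  refine ⟨z⁻¹ • ∑' n, y ^ n, ?_, ?_, ?_⟩
  · rw [hsplit, smul_mul_smul_comm, inv_mul_cancel₀ hz, one_smul,
      hsum.of_norm.tsum_pow_mul_one_sub]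
  · rw [hsplit, smul_mul_smul_comm, mul_inv_cancel₀ hz, one_smul,
      hsum.of_norm.one_sub_mul_tsum_pow]
  · calc ‖z⁻¹ • ∑' n, y ^ n‖ ≤ ‖z‖⁻¹ * ∑' n, ‖y ^ n‖ := by
          rw [norm_smul, norm_inv]; gcongr; exact norm_tsum_le_tsum_norm hsum
      _ ≤ ‖z‖⁻¹ * Real.exp (r / ‖z‖) := by
          rw [Real.exp_eq_exp_ℝ, NormedSpace.exp_eq_tsum_div]
          gcongr
          exact hsum.tsum_le_tsum hy (Real.summable_pow_div_factorial _)

theorem lintegral_mul_setLIntegral_Iic_eq {α : Type*} [MeasurableSpace α] [LinearOrder α]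
    [TopologicalSpace α] [OrderClosedTopology α] [SecondCountableTopology α]
    [OpensMeasurableSpace α] (μ : Measure α) [SFinite μ] {w f : α → ℝ≥0∞}
    (hw : Measurable w) (hf : Measurable f) :
    ∫⁻ x, w x * ∫⁻ t in Iic x, f t ∂μ ∂μ = ∫⁻ t, (∫⁻ x in Ici t, w x ∂μ) * f t ∂μ := by
  set F : α × α → ℝ≥0∞ := {p | p.2 ≤ p.1}.indicator fun p => w p.1 * f p.2
  have hF : Measurable F := ((hw.comp measurable_fst).mul (hf.comp measurable_snd)).indicator
    (measurableSet_le measurable_snd measurable_fst)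
  have hFx (x t : α) : F (x, t) = w x * (Iic x).indicator f t := by
    by_cases h : t ≤ x <;> simp [F, h]
  have hFt (x t : α) : F (x, t) = (Ici t).indicator w x * f t := by
    by_cases h : t ≤ x <;> simp [F, h]
  calc ∫⁻ x, w x * ∫⁻ t in Iic x, f t ∂μ ∂μ = ∫⁻ x, ∫⁻ t, F (x, t) ∂μ ∂μ := by
        simp_rw [hFx, lintegral_const_mul _ (hf.indicator measurableSet_Iic),
          lintegral_indicator measurableSet_Iic]
    _ = ∫⁻ t, ∫⁻ x, F (x, t) ∂μ ∂μ := lintegral_lintegral_swap hF.aemeasurable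
    _ = ∫⁻ t, (∫⁻ x in Ici t, w x ∂μ) * f t ∂μ := by
        simp_rw [hFt, lintegral_mul_const _ (hw.indicator measurableSet_Ici),
          lintegral_indicator measurableSet_Ici]

noncomputable def volterraWeight (b : ℝ) (k : ℕ) (x : ℝ) : ℝ≥0∞ :=
  ENNReal.ofReal ((b - x) ^ k / k !)

theorem measurable_volterraWeight (b : ℝ) (k : ℕ) : Measurable (volterraWeight b k) := by
  unfold volterraWeight; fun_prop

theorem setLIntegral_Icc_volterraWeight {t b : ℝ} (htb : t ≤ b) (k : ℕ) :
    ∫⁻ x in Icc t b, volterraWeight b k x = volterraWeight b (k + 1) t := by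
  have hint : IntegrableOn (fun x : ℝ => (b - x) ^ k / k !) (Icc t b) :=
    (by fun_prop : Continuous fun x : ℝ => (b - x) ^ k / k !).integrableOn_Icc
  have hnonneg : 0 ≤ᵐ[volume.restrict (Icc t b)] fun x : ℝ => (b - x) ^ k / k ! :=
    (ae_restrict_mem measurableSet_Icc).mono fun x hx => by
      have : 0 ≤ b - x := sub_nonneg.2 hx.2
      positivity
  unfold volterraWeight
  rw [← ofReal_integral_eq_lintegral_ofReal hint hnonneg,
    integral_Icc_eq_integral_Ioc, ← intervalIntegral.integral_of_le htb,
    intervalIntegral.integral_div, intervalIntegral.integral_comp_sub_left (· ^ k) b,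
    sub_self, integral_pow, Nat.factorial_succ]
  congr 1
  push_cast
  field_simp
  ring

theorem setLIntegral_volterraWeight_mul_enorm_intervalIntegral_le {a b : ℝ} {g : ℝ → ℂ}
    (hg : Measurable g) (k : ℕ) :
    ∫⁻ x in Ioo a b, volterraWeight b k x * ‖∫ t in a..x, g t‖ₑ ≤
      ∫⁻ t in Ioo a b, volterraWeight b (k + 1) t * ‖g t‖ₑ := by
  set μ := volume.restrict (Ioo a b)
  calc ∫⁻ x, volterraWeight b k x * ‖∫ t in a..x, g t‖ₑ ∂μ
      ≤ ∫⁻ x, volterraWeight b k x * ∫⁻ t in Iic x, ‖g t‖ₑ ∂μ ∂μ := by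
        refine lintegral_mono_ae ((ae_restrict_mem measurableSet_Ioo).mono fun x hx => ?_)
        gcongr
        rw [intervalIntegral.integral_of_le hx.1.le, Measure.restrict_restrict measurableSet_Iic]
        refine (enorm_integral_le_lintegral_enorm _).trans (lintegral_mono_set ?_)
        exact fun t ht => ⟨ht.2, ht.1, ht.2.trans_lt hx.2⟩
    _ = ∫⁻ t, (∫⁻ x in Ici t, volterraWeight b k x ∂μ) * ‖g t‖ₑ ∂μ :=
        lintegral_mul_setLIntegral_Iic_eq μ (measurable_volterraWeight b k) hg.enorm
    _ ≤ ∫⁻ t, volterraWeight b (k + 1) t * ‖g t‖ₑ ∂μ := by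
        refine lintegral_mono_ae ((ae_restrict_mem measurableSet_Ioo).mono fun t ht => ?_)
        gcongr
        rw [Measure.restrict_restrict measurableSet_Ici,
          ← setLIntegral_Icc_volterraWeight ht.2.le]
        exact lintegral_mono_set fun x hx => ⟨hx.1, hx.2.2.le⟩

def IsVolterraOperator {a b : ℝ}
    (J : Lp ℂ 1 (volume.restrict (Ioo a b)) →L[ℂ] Lp ℂ 1 (volume.restrict (Ioo a b))) : Prop :=
  ∀ g : Lp ℂ 1 (volume.restrict (Ioo a b)),
    (J g : ℝ → ℂ) =ᵐ[volume.restrict (Ioo a b)] fun x => ∫ t in a..x, (g : ℝ → ℂ) t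

namespace IsVolterraOperator

variable {a b : ℝ}
  {J : Lp ℂ 1 (volume.restrict (Ioo a b)) →L[ℂ] Lp ℂ 1 (volume.restrict (Ioo a b))}

theorem setLIntegral_volterraWeight_mul_enorm_pow_apply_le (hJ : IsVolterraOperator J)
    (n k : ℕ) (g : Lp ℂ 1 (volume.restrict (Ioo a b))) :
    ∫⁻ x in Ioo a b, volterraWeight b k x * ‖(J ^ n) g x‖ₑ ≤
      ∫⁻ x in Ioo a b, volterraWeight b (k + n) x * ‖g x‖ₑ := by
  induction n generalizing g with
  | zero => simp
  | succ n ih =>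
    calc ∫⁻ x in Ioo a b, volterraWeight b k x * ‖(J ^ (n + 1)) g x‖ₑ
        ≤ ∫⁻ x in Ioo a b, volterraWeight b (k + n) x * ‖J g x‖ₑ := by
          rw [pow_succ]; exact ih (J g)
      _ = ∫⁻ x in Ioo a b, volterraWeight b (k + n) x * ‖∫ t in a..x, (g : ℝ → ℂ) t‖ₑ :=
          lintegral_congr_ae <| (hJ g).mono fun x hx => by simp only [hx]
      _ ≤ ∫⁻ x in Ioo a b, volterraWeight b (k + (n + 1)) x * ‖g x‖ₑ :=
          setLIntegral_volterraWeight_mul_enorm_intervalIntegral_le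
            (Lp.stronglyMeasurable g).measurable (k + n)

theorem norm_pow_le (hab : a ≤ b) (hJ : IsVolterraOperator J) (n : ℕ) :
    ‖J ^ n‖ ≤ (b - a) ^ n / n ! := by
  have hC : 0 ≤ (b - a) ^ n / n ! := by have := sub_nonneg.2 hab; positivity
  have hweight : ∀ x ∈ Ioo a b, volterraWeight b n x ≤ ENNReal.ofReal ((b - a) ^ n / n !) :=
    fun x hx => by
      have := sub_nonneg.2 hx.2.le
      unfold volterraWeight; gcongr; linarith [hx.1]
  have hbound : ‖J ^ n‖ₑ ≤ ENNReal.ofReal ((b - a) ^ n / n !) := by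
    refine ContinuousLinearMap.opENorm_le_bound _ fun g => ?_
    simp only [Lp.enorm_def, eLpNorm_one_eq_lintegral_enorm]
    calc ∫⁻ x in Ioo a b, ‖(J ^ n) g x‖ₑ
        = ∫⁻ x in Ioo a b, volterraWeight b 0 x * ‖(J ^ n) g x‖ₑ := by simp [volterraWeight]
      _ ≤ ∫⁻ x in Ioo a b, volterraWeight b n x * ‖g x‖ₑ := by
          simpa using hJ.setLIntegral_volterraWeight_mul_enorm_pow_apply_le n 0 g
      _ ≤ ∫⁻ x in Ioo a b, ENNReal.ofReal ((b - a) ^ n / n !) * ‖g x‖ₑ :=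
          lintegral_mono_ae <| (ae_restrict_mem measurableSet_Ioo).mono fun x hx => by
            gcongr; exact hweight x hx
      _ = ENNReal.ofReal ((b - a) ^ n / n !) * ∫⁻ x in Ioo a b, ‖g x‖ₑ :=
          lintegral_const_mul' _ _ ENNReal.ofReal_ne_top
  rwa [← ofReal_norm, ENNReal.ofReal_le_ofReal_iff hC] at hbound

end IsVolterraOperator

/-- on `Z = L¹((a,b), ℂ)`, the Volterra operator
`𝒥 g = (x ↦ ∫_a^x g(t) dt)` has, for every `z ≠ 0`, a bounded resolvent
`(z·id − 𝒥)⁻¹` with `‖(z·id − 𝒥)⁻¹‖ ≤ (1/|z|)·exp((b−a)/|z|)`. -/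
theorem stmt_0 (a b : ℝ) (hab : a < b)
    (J : Lp ℂ 1 (volume.restrict (Set.Ioo a b)) →L[ℂ] Lp ℂ 1 (volume.restrict (Set.Ioo a b)))
    (hJ : ∀ g : Lp ℂ 1 (volume.restrict (Set.Ioo a b)),
      (J g : ℝ → ℂ) =ᵐ[volume.restrict (Set.Ioo a b)]
        fun x => ∫ t in a..x, (g : ℝ → ℂ) t)
    (z : ℂ) (hz : z ≠ 0) :
    ∃ T : Lp ℂ 1 (volume.restrict (Set.Ioo a b)) →L[ℂ]
          Lp ℂ 1 (volume.restrict (Set.Ioo a b)),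
      (∀ g, T (z • g - J g) = g) ∧ (∀ g, z • T g - J (T g) = g) ∧
      ‖T‖ ≤ 1 / ‖z‖ * Real.exp ((b - a) / ‖z‖) := by
  obtain ⟨T, hTleft, hTright, hTnorm⟩ :=
    exists_inverse_smul_one_sub_of_norm_pow_le (IsVolterraOperator.norm_pow_le hab.le hJ) hz
  refine ⟨T, fun g => ?_, fun g => ?_, by rwa [one_div]⟩
  · simpa using congrArg (· g) hTleft
  · simpa using congrArg (· g) hTright
end

section
/- For every z ∈ ℂ with z ≠ 0, the operator z·id − 𝒥 : W → W has a bounded linear inverse, and this inverse satisfies ‖(z·id − 𝒥)^{-1}‖ ≤ (1/|z|)·exp((b−a)/|z|). -/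
/-!
The `n`-th iterate of the integration operator satisfies `|(𝒥ⁿ g)(x)| ≤ ‖g‖ (x - a)ⁿ / n!`,
by induction integrating the bound, so `‖𝒥ⁿ‖ ≤ (b - a)ⁿ / n!`. Hence the Neumann series
`z⁻¹ ∑ (z⁻¹ 𝒥)ⁿ` converges absolutely to the inverse of `z - 𝒥`, and its norm is at most
`|z|⁻¹ ∑ ((b - a) / |z|)ⁿ / n! = |z|⁻¹ exp ((b - a) / |z|)`.
-/

open scoped Nat

section NeumannSeries

variable {𝕜 A : Type*} [NormedField 𝕜] [NormedRing A] [NormedAlgebra 𝕜 A]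

lemma summable_norm_pow_of_le_pow_div_factorial {X : A} {c : ℝ}
    (hX : ∀ n : ℕ, ‖X ^ n‖ ≤ c ^ n / n !) : Summable (fun n : ℕ ↦ ‖X ^ n‖) :=
  (Real.summable_pow_div_factorial c).of_nonneg_of_le (fun _ ↦ norm_nonneg _) hX

lemma norm_tsum_pow_le_exp {X : A} {c : ℝ} (hX : ∀ n : ℕ, ‖X ^ n‖ ≤ c ^ n / n !) :
    ‖∑' n : ℕ, X ^ n‖ ≤ Real.exp c :=
  calc ‖∑' n : ℕ, X ^ n‖ ≤ ∑' n : ℕ, ‖X ^ n‖ :=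
        norm_tsum_le_tsum_norm (summable_norm_pow_of_le_pow_div_factorial hX)
    _ ≤ ∑' n : ℕ, c ^ n / n ! := (summable_norm_pow_of_le_pow_div_factorial hX).tsum_le_tsum hX
          (Real.summable_pow_div_factorial c)
    _ = Real.exp c := by rw [Real.exp_eq_exp_ℝ, NormedSpace.exp_eq_tsum_div]

lemma exists_inverse_smul_one_sub_of_norm_pow_le_s1 [CompleteSpace A] {J : A} {C : ℝ}
    (hJ : ∀ n : ℕ, ‖J ^ n‖ ≤ C ^ n / n !) {z : 𝕜} (hz : z ≠ 0) :
    ∃ T : A, T * (z • 1 - J) = 1 ∧ (z • 1 - J) * T = 1 ∧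
      ‖T‖ ≤ 1 / ‖z‖ * Real.exp (C / ‖z‖) := by
  set X : A := z⁻¹ • J
  have hX : ∀ n : ℕ, ‖X ^ n‖ ≤ (C / ‖z‖) ^ n / n ! := fun n ↦
    calc ‖X ^ n‖ = ‖z‖⁻¹ ^ n * ‖J ^ n‖ := by rw [smul_pow, norm_smul, norm_pow, norm_inv]
      _ ≤ ‖z‖⁻¹ ^ n * (C ^ n / n !) := by gcongr; exact hJ n
      _ = (C / ‖z‖) ^ n / n ! := by ring
  have hsum : Summable (X ^ ·) := (summable_norm_pow_of_le_pow_div_factorial hX).of_norm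
  have hsub : z • (1 : A) - J = z • (1 - X) := by
    rw [smul_sub, smul_smul, mul_inv_cancel₀ hz, one_smul]
  refine ⟨z⁻¹ • ∑' n : ℕ, X ^ n, ?_, ?_, ?_⟩
  · rw [hsub, smul_mul_smul, inv_mul_cancel₀ hz, one_smul, hsum.tsum_pow_mul_one_sub]
  · rw [hsub, smul_mul_smul, mul_inv_cancel₀ hz, one_smul, hsum.one_sub_mul_tsum_pow]
  · rw [norm_smul, norm_inv, one_div]
    gcongr
    exact norm_tsum_pow_le_exp hX

end NeumannSeries

lemma integral_sub_pow_div_factorial (a x : ℝ) (n : ℕ) :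
    ∫ t in a..x, (t - a) ^ n / n ! = (x - a) ^ (n + 1) / (n + 1)! := by
  rw [intervalIntegral.integral_div, intervalIntegral.integral_comp_sub_right (· ^ n),
    integral_pow, sub_self, zero_pow n.succ_ne_zero, sub_zero, Nat.factorial_succ]
  push_cast
  field_simp

section IntegrationOperator

variable {a b : ℝ}

def IsIntegrationOperator (hab : a ≤ b) (J : C(Set.Icc a b, ℂ) →L[ℂ] C(Set.Icc a b, ℂ)) :
    Prop :=
  ∀ g : C(Set.Icc a b, ℂ), ∀ x : Set.Icc a b, J g x = ∫ t in a..(x : ℝ), Set.IccExtend hab g t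

variable {hab : a ≤ b} {J : C(Set.Icc a b, ℂ) →L[ℂ] C(Set.Icc a b, ℂ)}

lemma IsIntegrationOperator.norm_pow_apply_le (hJ : IsIntegrationOperator hab J) (n : ℕ)
    (g : C(Set.Icc a b, ℂ)) (x : Set.Icc a b) :
    ‖(J ^ n) g x‖ ≤ ‖g‖ * ((x : ℝ) - a) ^ n / n ! := by
  induction n generalizing x with
  | zero => simpa using g.norm_coe_le_norm x
  | succ n ih =>
    have hax : a ≤ (x : ℝ) := x.2.1
    rw [pow_succ', mul_apply_eq_comp, hJ, mul_div_assoc,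
      ← integral_sub_pow_div_factorial, ← intervalIntegral.integral_const_mul]
    refine (intervalIntegral.norm_integral_le_integral_norm hax).trans
      (intervalIntegral.integral_mono_on hax ?_ ?_ fun t ht ↦ ?_)
    · exact ((J ^ n) g).continuous.Icc_extend'.norm.intervalIntegrable _ _
    · exact (by fun_prop : Continuous fun t : ℝ ↦ ‖g‖ * ((t - a) ^ n / n !)).intervalIntegrable
        _ _
    · have ht' : t ∈ Set.Icc a b := ⟨ht.1, ht.2.trans x.2.2⟩
      rw [Set.IccExtend_of_mem hab _ ht', ← mul_div_assoc]
      exact ih ⟨t, ht'⟩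

lemma IsIntegrationOperator.norm_pow_le (hJ : IsIntegrationOperator hab J) (n : ℕ) :
    ‖J ^ n‖ ≤ (b - a) ^ n / n ! := by
  have hba : 0 ≤ b - a := sub_nonneg.2 hab
  refine ContinuousLinearMap.opNorm_le_bound _ (by positivity) fun g ↦ ?_
  refine (ContinuousMap.norm_le _ (by positivity)).2 fun x ↦ ?_
  calc ‖(J ^ n) g x‖ ≤ ‖g‖ * ((x : ℝ) - a) ^ n / n ! := hJ.norm_pow_apply_le n g x
    _ ≤ ‖g‖ * (b - a) ^ n / n ! := by gcongr; exacts [sub_nonneg.2 x.2.1, x.2.2]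
    _ = (b - a) ^ n / n ! * ‖g‖ := by ring

end IntegrationOperator

/-- on `W = C([a,b], ℂ)` with the supremum norm, the Volterra
operator `𝒥 g = (x ↦ ∫_a^x g(t) dt)` has, for every `z ≠ 0`, a bounded
resolvent `(z·id − 𝒥)⁻¹` with `‖(z·id − 𝒥)⁻¹‖ ≤ (1/|z|)·exp((b−a)/|z|)`. -/
theorem stmt_1 (a b : ℝ) (hab : a < b)
    (J : C(Set.Icc a b, ℂ) →L[ℂ] C(Set.Icc a b, ℂ))
    (hJ : ∀ g : C(Set.Icc a b, ℂ), ∀ x : Set.Icc a b,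
      J g x = ∫ t in a..(x : ℝ), Set.IccExtend hab.le (⇑g) t)
    (z : ℂ) (hz : z ≠ 0) :
    ∃ T : C(Set.Icc a b, ℂ) →L[ℂ] C(Set.Icc a b, ℂ),
      (∀ g, T (z • g - J g) = g) ∧ (∀ g, z • T g - J (T g) = g) ∧
      ‖T‖ ≤ 1 / ‖z‖ * Real.exp ((b - a) / ‖z‖) := by
  have hJ' : IsIntegrationOperator hab.le J := hJ
  obtain ⟨T, hTleft, hTright, hTnorm⟩ :=
    exists_inverse_smul_one_sub_of_norm_pow_le_s1 (J := J) hJ'.norm_pow_le hz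
  refine ⟨T, fun g ↦ ?_, fun g ↦ ?_, hTnorm⟩
  · simpa using congr($hTleft g)
  · simpa using congr($hTright g)
end

section
/- Let R > 0, γ ≥ 0 and t > 0. Suppose f̂ : ℂ → ℂ is complex differentiable on an open set containing {s ∈ ℂ : |s| ≥ R} ∪ {s ∈ ℂ : Re s ≥ γ}, that f̂(s) → 0 as |s| → ∞, and that the limit L := lim_{T→∞} ∫_{−T}^{T} e^{(γ+iy)t}·f̂(γ+iy)·i dy exists. Then L = ∫_0^{2π} e^{t·R·e^{iθ}}·f̂(R·e^{iθ})·i·R·e^{iθ} dθ. -/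
open MeasureTheory Filter

/-!
Put `g s = exp (s t) f̂ s` and `z = γ + i T`. The points `γ ± i T` lie on the circle `|s| = |z|`
at the angles `± arg z`. On a disc inside `U` that contains the cap `{Re s ≥ γ, |s| ≤ |z|}`, `g`
has a primitive, so the integral of `g` over the segment from `γ - i T` to `γ + i T` equals its
integral over the right arc `|θ| ≤ arg z`. By Cauchy's theorem on an annulus the integral over
the whole circle of radius `|z| ≥ R` equals that over the circle of radius `R`, so the truncated
Bromwich integral is the circle integral minus the integral over the left arc
`arg z ≤ θ ≤ 2π - arg z`. By Jordan's lemma the latter tends to `0`: `f̂ → 0` at infinity while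
`∫ |z| exp (t |z| cos θ) dθ` over the left arc stays bounded.
-/

open Set Metric Complex ComplexConjugate
open scoped Real Topology

namespace Complex

theorem exists_lt_re_subset_of_isCompact_compl {U : Set ℂ} {γ : ℝ} (hU : IsCompact Uᶜ)
    (hγ : {s : ℂ | γ ≤ s.re} ⊆ U) : ∃ a < γ, {s : ℂ | a < s.re} ⊆ U := by
  rcases Uᶜ.eq_empty_or_nonempty with hempty | hne
  · exact ⟨γ - 1, by linarith, fun s _ => compl_empty_iff.mp hempty ▸ mem_univ s⟩
  obtain ⟨w, hwU, hmax⟩ := hU.exists_isMaxOn hne continuous_re.continuousOn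
  refine ⟨w.re, lt_of_not_ge fun h => hwU (hγ h), fun s (hs : w.re < s.re) => ?_⟩
  by_contra hsU
  exact (hmax hsU).not_gt hs

theorem exists_ball_subset_re_gt {a γ : ℝ} (ha : a < γ) (ρ : ℝ) :
    ∃ c r, {s : ℂ | γ ≤ s.re} ∩ closedBall 0 ρ ⊆ ball c r ∧ ball c r ⊆ {s : ℂ | a < s.re} := by
  -- the disc of radius `K` tangent to `Re s = a` from the right swallows the cap for large `K`
  set K := ((ρ + |a|) ^ 2 + ρ ^ 2) / (γ - a) + 1
  have hK : 0 < K := by positivity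
  refine ⟨(a + K : ℝ), K, fun s ⟨(hre : γ ≤ s.re), hs⟩ => ?_, fun s hs => ?_⟩
  · rw [mem_closedBall, dist_zero_right] at hs
    have hx : |s.re| ≤ ρ := (abs_re_le_norm s).trans hs
    have hy : |s.im| ≤ ρ := (abs_im_le_norm s).trans hs
    have h2K : (ρ + |a|) ^ 2 + ρ ^ 2 < 2 * (s.re - a) * K := by
      have : (ρ + |a|) ^ 2 + ρ ^ 2 < (γ - a) * K := by
        rw [mul_add, mul_div_cancel₀ _ (by linarith : γ - a ≠ 0)]; linarith
      nlinarith [abs_nonneg a]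
    rw [mem_ball, dist_eq, ← sq_lt_sq₀ (norm_nonneg _) hK.le, Complex.sq_norm, normSq_apply]
    simp only [sub_re, ofReal_re, sub_im, ofReal_im, sub_zero]
    nlinarith [abs_le.mp hx, abs_le.mp hy, sq_abs s.im, le_abs_self a, neg_abs_le a]
  · have := (abs_re_le_norm (s - (a + K : ℝ))).trans_lt (mem_ball_iff_norm.mp hs)
    simp only [sub_re, ofReal_re] at this
    exact show a < s.re by linarith [neg_abs_le (s.re - (a + K))]

end Complex

theorem intervalIntegral.integral_smul_comp_eq_sub_of_hasDerivAt {E : Type*}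
    [NormedAddCommGroup E] [NormedSpace ℂ E] [CompleteSpace E] {F f : ℂ → E} {c c' : ℝ → ℂ}
    {a b : ℝ} (hF : ∀ x ∈ uIcc a b, HasDerivAt F (f (c x)) (c x))
    (hc : ∀ x ∈ uIcc a b, HasDerivAt c (c' x) x)
    (hint : IntervalIntegrable (fun x => c' x • f (c x)) volume a b) :
    ∫ x in a..b, c' x • f (c x) = F (c b) - F (c a) :=
  integral_eq_sub_of_hasDerivAt (fun x hx => (hF x hx).scomp x (hc x hx)) hint

namespace Real

theorem integral_exp_mul_cos_le {k : ℝ} (hk : 0 < k) :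
    ∫ θ in π / 2..π, exp (k * cos θ) ≤ π / (2 * k) := by
  set c := 2 * k / π
  have hc : 0 < c := by positivity
  have hbound : ∀ θ ∈ Icc (π / 2) π, exp (k * cos θ) ≤ exp (-c * (θ - π / 2)) := by
    intro θ ⟨h₁, h₂⟩
    have := mul_le_sin (x := θ - π / 2) (by linarith) (by linarith)
    rw [sin_sub_pi_div_two] at this
    rw [exp_le_exp]
    calc k * cos θ ≤ k * -(2 / π * (θ - π / 2)) := by gcongr; linarith
      _ = -c * (θ - π / 2) := by ring
  have hprim : ∀ θ ∈ uIcc (π / 2) π, HasDerivAt (fun θ => exp (-c * (θ - π / 2)) / -c)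
      (exp (-c * (θ - π / 2))) θ := by
    intro θ _
    have : HasDerivAt (fun θ => -c * (θ - π / 2)) (-c) θ := by
      simpa using ((hasDerivAt_id θ).sub_const (π / 2)).const_mul (-c)
    exact (this.exp.div_const (-c)).congr_deriv (by field_simp)
  calc ∫ θ in π / 2..π, exp (k * cos θ) ≤ ∫ θ in π / 2..π, exp (-c * (θ - π / 2)) :=
        intervalIntegral.integral_mono_on (by linarith [pi_pos])
          (by apply Continuous.intervalIntegrable; fun_prop)
          (by apply Continuous.intervalIntegrable; fun_prop) hbound
    _ = (1 - exp (-c * (π / 2))) / c := by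
        rw [intervalIntegral.integral_eq_sub_of_hasDerivAt hprim
          (by apply Continuous.intervalIntegrable; fun_prop), sub_self, mul_zero, exp_zero,
          show π - π / 2 = π / 2 by ring]
        field_simp
        ring
    _ ≤ 1 / c := by gcongr; linarith [exp_pos (-c * (π / 2))]
    _ = π / (2 * k) := by simp only [c]; field_simp

theorem integral_mul_exp_mul_cos_le {r t θ₀ : ℝ} (hr : 0 < r) (ht : 0 < t) (h₀ : 0 ≤ θ₀)
    (h₁ : θ₀ ≤ π / 2) :
    ∫ θ in θ₀..2 * π - θ₀, r * exp (r * cos θ * t) ≤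
      π * (r * cos θ₀ * exp (r * cos θ₀ * t) + 1 / t) := by
  have hint : ∀ a b, IntervalIntegrable (fun θ => r * exp (r * cos θ * t)) volume a b :=
    fun a b => by apply Continuous.intervalIntegrable; fun_prop
  have hsymm : ∫ θ in π..2 * π - θ₀, r * exp (r * cos θ * t) =
      ∫ θ in θ₀..π, r * exp (r * cos θ * t) := by
    have := intervalIntegral.integral_comp_sub_left (a := θ₀) (b := π)
      (fun θ => r * exp (r * cos θ * t)) (2 * π)
    simp only [cos_two_pi_sub] at this
    rw [this, show 2 * π - π = π by ring]
  have hnear : ∫ θ in θ₀..π / 2, r * exp (r * cos θ * t) ≤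
      π / 2 * (r * cos θ₀ * exp (r * cos θ₀ * t)) := by
    have hlen : π / 2 - θ₀ ≤ π / 2 * cos θ₀ := by
      have := mul_le_sin (x := π / 2 - θ₀) (by linarith) (by linarith)
      rw [sin_pi_div_two_sub] at this
      calc π / 2 - θ₀ = π / 2 * (2 / π * (π / 2 - θ₀)) := by field_simp
        _ ≤ π / 2 * cos θ₀ := by gcongr
    calc ∫ θ in θ₀..π / 2, r * exp (r * cos θ * t)
        ≤ ∫ θ in θ₀..π / 2, r * exp (r * cos θ₀ * t) := by
          refine intervalIntegral.integral_mono_on h₁ (hint _ _) (by simp) fun θ hθ => ?_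
          gcongr
          exact cos_le_cos_of_nonneg_of_le_pi h₀ (by linarith [hθ.2, pi_pos]) hθ.1
      _ = (π / 2 - θ₀) * r * exp (r * cos θ₀ * t) := by
          rw [intervalIntegral.integral_const, smul_eq_mul]; ring
      _ ≤ π / 2 * cos θ₀ * r * exp (r * cos θ₀ * t) := by gcongr
      _ = π / 2 * (r * cos θ₀ * exp (r * cos θ₀ * t)) := by ring
  have hfar : ∫ θ in π / 2..π, r * exp (r * cos θ * t) ≤ π / (2 * t) := by
    rw [intervalIntegral.integral_const_mul]
    calc r * ∫ θ in π / 2..π, exp (r * cos θ * t)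
        = r * ∫ θ in π / 2..π, exp (r * t * cos θ) := by simp_rw [mul_right_comm r (cos _) t]
      _ ≤ r * (π / (2 * (r * t))) := by gcongr; exact integral_exp_mul_cos_le (mul_pos hr ht)
      _ = π / (2 * t) := by field_simp
  rw [← intervalIntegral.integral_add_adjacent_intervals (hint _ π) (hint _ _), hsymm,
    ← intervalIntegral.integral_add_adjacent_intervals (hint _ (π / 2)) (hint _ _)]
  have : π / (2 * t) = π / 2 * (1 / t) := by field_simp
  linarith

end Real

section ArcIntegral

variable {E : Type*} [NormedAddCommGroup E] [NormedSpace ℂ E]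

noncomputable def arcIntegral (f : ℂ → E) (r a b : ℝ) : E :=
  ∫ θ in a..b, deriv (circleMap 0 r) θ • f (circleMap 0 r θ)

theorem circleIntegral_eq_arcIntegral_add_arcIntegral {f : ℂ → E} {r : ℝ}
    (hf : ContinuousOn f (sphere 0 |r|)) (θ : ℝ) :
    ∮ z in C(0, r), f z = arcIntegral f r (-θ) θ + arcIntegral f r θ (2 * π - θ) := by
  have hcont : Continuous fun θ => deriv (circleMap 0 r) θ • f (circleMap 0 r θ) := by
    simp only [deriv_circleMap]
    exact (by fun_prop : Continuous fun θ => circleMap 0 r θ * I).smul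
      (hf.comp_continuous (continuous_circleMap 0 r) (circleMap_mem_sphere' 0 r))
  have hper : Function.Periodic (fun θ => deriv (circleMap 0 r) θ • f (circleMap 0 r θ))
      (2 * π) := by
    intro θ
    simp only [deriv_circleMap, periodic_circleMap 0 r θ]
  have hshift := hper.intervalIntegral_add_eq 0 (-θ)
  rw [zero_add, neg_add_eq_sub] at hshift
  rw [circleIntegral, hshift, arcIntegral, arcIntegral,
    intervalIntegral.integral_add_adjacent_intervals (hcont.intervalIntegrable _ _)
      (hcont.intervalIntegrable _ _)]

theorem circleIntegral_eq_of_le_radius {f : ℂ → E} {R ρ : ℝ} (hR : 0 < R) (hRρ : R ≤ ρ)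
    (hf : DifferentiableOn ℂ f {s | R ≤ ‖s‖}) : ∮ z in C(0, ρ), f z = ∮ z in C(0, R), f z :=
  circleIntegral_eq_of_differentiable_on_annulus_off_countable hR hRρ countable_empty
    (hf.continuousOn.mono fun s ⟨_, hs⟩ => by simpa using hs)
    fun s ⟨⟨_, hs⟩, _⟩ => hf.differentiableAt (mem_of_superset
      ((isOpen_lt continuous_const continuous_norm).mem_nhds (by simpa using hs))
      fun s (hs : R < ‖s‖) => hs.le)

theorem integral_segment_eq_arcIntegral [CompleteSpace E] {g : ℂ → E} {a : ℝ} {z : ℂ}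
    (hg : DifferentiableOn ℂ g {s | a < s.re}) (ha : a < z.re) (hz : 0 ≤ z.im) :
    ∫ y in (-z.im)..z.im, I • g (z.re + I * y) = arcIntegral g ‖z‖ (-arg z) (arg z) := by
  obtain ⟨c, r, hcap, hball⟩ := exists_ball_subset_re_gt ha ‖z‖
  obtain ⟨F, hF⟩ := (hg.mono hball).isExactOn_ball
  have hcont : ContinuousOn g (ball c r) := (hg.mono hball).continuousOn
  have hseg : MapsTo (fun y : ℝ => (z.re + I * y : ℂ)) (uIcc (-z.im) z.im) (ball c r) := by
    intro y hy
    rw [uIcc_of_le (by linarith)] at hy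
    refine hcap ⟨by simp, ?_⟩
    rw [mem_closedBall, dist_zero_right, ← sq_le_sq₀ (norm_nonneg _) (norm_nonneg _),
      Complex.sq_norm, Complex.sq_norm, normSq_apply, normSq_apply]
    simp only [add_re, ofReal_re, mul_re, I_re, ofReal_im, I_im, add_im, mul_im]
    nlinarith [hy.1, hy.2]
  have harc : MapsTo (circleMap 0 ‖z‖) (uIcc (-arg z) (arg z)) (ball c r) := by
    intro θ hθ
    have harg : 0 ≤ arg z := arg_nonneg_iff.mpr hz
    rw [uIcc_of_le (by linarith)] at hθ
    refine hcap ⟨?_, circleMap_mem_closedBall 0 (norm_nonneg z) θ⟩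
    show z.re ≤ (circleMap 0 ‖z‖ θ).re
    rw [circleMap_zero_re, ← norm_mul_cos_arg, ← Real.cos_abs θ]
    exact mul_le_mul_of_nonneg_left (Real.cos_le_cos_of_nonneg_of_le_pi (abs_nonneg θ)
      (arg_le_pi z) (abs_le.mpr hθ)) (norm_nonneg z)
  have hseg_eq : ∫ y in (-z.im)..z.im, I • g (z.re + I * y) = F z - F (conj z) := by
    have := intervalIntegral.integral_smul_comp_eq_sub_of_hasDerivAt (c' := fun _ => I)
      (fun y hy => hF _ (hseg hy))
      (fun y _ => by simpa using ((hasDerivAt_id y).ofReal_comp.const_mul I).const_add (z.re : ℂ))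
      ((continuousOn_const.smul (hcont.comp (by fun_prop) hseg)).intervalIntegrable)
    have hend : (z.re + I * z.im : ℂ) = z ∧ (z.re + I * ↑(-z.im) : ℂ) = conj z := by
      constructor <;> apply Complex.ext <;> simp
    simpa only [hend] using this
  have harc_eq : arcIntegral g ‖z‖ (-arg z) (arg z) = F z - F (conj z) := by
    have := intervalIntegral.integral_smul_comp_eq_sub_of_hasDerivAt
      (fun θ hθ => hF _ (harc hθ))
      (fun θ _ => (hasDerivAt_circleMap 0 ‖z‖ θ).differentiableAt.hasDerivAt) ?_
    · have hend : circleMap 0 ‖z‖ (arg z) = z := by rw [circleMap_zero, norm_mul_exp_arg_mul_I]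
      rwa [← conj_circleMap_zero, hend] at this
    · simp only [deriv_circleMap]
      exact ((by fun_prop : Continuous fun θ => circleMap 0 ‖z‖ θ * I).continuousOn.smul
        (hcont.comp (continuous_circleMap 0 _).continuousOn harc)).intervalIntegrable
  rw [hseg_eq, harc_eq]

theorem integral_segment_eq_circleIntegral_sub_arcIntegral [CompleteSpace E] {g : ℂ → E}
    {U : Set ℂ} {R γ T : ℝ} (hR : 0 < R) (hU : IsOpen U)
    (hUsub : {s : ℂ | R ≤ ‖s‖} ∪ {s : ℂ | γ ≤ s.re} ⊆ U) (hg : DifferentiableOn ℂ g U)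
    (hT : R ≤ T) :
    ∫ y in (-T)..T, I • g (γ + I * y) = (∮ z in C(0, R), g z) -
      arcIntegral g ‖(γ + I * T : ℂ)‖ (arg (γ + I * T)) (2 * π - arg (γ + I * T)) := by
  have hUc : IsCompact Uᶜ := isCompact_of_isClosed_isBounded hU.isClosed_compl
    ((isBounded_ball (x := 0) (r := R)).subset fun s hs => by
      by_contra h
      exact hs (hUsub (Or.inl (by simpa using h))))
  obtain ⟨a, haγ, haU⟩ :=
    exists_lt_re_subset_of_isCompact_compl hUc (subset_union_right.trans hUsub)
  have hgR : DifferentiableOn ℂ g {s | R ≤ ‖s‖} := hg.mono (subset_union_left.trans hUsub)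
  set z : ℂ := γ + I * T
  have hzre : z.re = γ := by simp [z]
  have hzim : z.im = T := by simp [z]
  have hRz : R ≤ ‖z‖ := hT.trans ((le_abs_self T).trans (by simpa [hzim] using abs_im_le_norm z))
  have hgz : ContinuousOn g (sphere 0 |‖z‖|) := hgR.continuousOn.mono fun s hs => by simp_all
  rw [← circleIntegral_eq_of_le_radius hR hRz hgR,
    circleIntegral_eq_arcIntegral_add_arcIntegral hgz (arg z),
    ← integral_segment_eq_arcIntegral (hg.mono haU) (hzre ▸ haγ) (by linarith),
    add_sub_cancel_right, hzre, hzim]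

end ArcIntegral

theorem norm_arcIntegral_exp_mul_le {f : ℂ → ℂ} {r t a b M : ℝ} (hab : a ≤ b) (hr : 0 ≤ r)
    (hM : ∀ θ, ‖f (circleMap 0 r θ)‖ ≤ M) :
    ‖arcIntegral (fun s => exp (s * t) * f s) r a b‖ ≤
      M * ∫ θ in a..b, r * Real.exp (r * Real.cos θ * t) := by
  rw [← intervalIntegral.integral_const_mul]
  refine intervalIntegral.norm_integral_le_of_norm_le hab (ae_of_all _ fun θ _ => ?_)
    (by apply Continuous.intervalIntegrable; fun_prop)
  rw [deriv_circleMap, norm_smul, norm_mul, norm_mul, norm_exp, norm_circleMap_zero, norm_I,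
    abs_of_nonneg hr, re_mul_ofReal, circleMap_zero_re]
  calc r * 1 * (Real.exp (r * Real.cos θ * t) * ‖f (circleMap 0 r θ)‖)
      ≤ r * 1 * (Real.exp (r * Real.cos θ * t) * M) := by gcongr; exact hM θ
    _ = M * (r * Real.exp (r * Real.cos θ * t)) := by ring

theorem tendsto_arcIntegral_left {f : ℂ → ℂ} {γ t : ℝ} (hγ : 0 ≤ γ) (ht : 0 < t)
    (hf : Tendsto f (comap (‖·‖) atTop) (𝓝 0)) :
    Tendsto (fun T : ℝ => arcIntegral (fun s => exp (s * t) * f s) ‖(γ + I * T : ℂ)‖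
      (arg (γ + I * T)) (2 * π - arg (γ + I * T))) atTop (𝓝 0) := by
  set C := π * (γ * Real.exp (γ * t) + 1 / t)
  rw [NormedAddGroup.tendsto_nhds_zero]
  intro ε hε
  obtain ⟨A, hA⟩ : ∃ A, ∀ s : ℂ, A ≤ ‖s‖ → ‖f s‖ ≤ ε / (C + 1) := by
    have := hf.eventually (closedBall_mem_nhds 0 (by positivity : 0 < ε / (C + 1)))
    rw [eventually_comap, eventually_atTop] at this
    obtain ⟨A, hA⟩ := this
    exact ⟨A, fun s hs => by simpa using hA ‖s‖ hs s rfl⟩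
  filter_upwards [eventually_ge_atTop (max A 1)] with T hT
  set z : ℂ := γ + I * T
  have hTz : T ≤ ‖z‖ := (le_abs_self T).trans (by simpa [z] using abs_im_le_norm z)
  have hz : 0 < ‖z‖ := by linarith [le_max_right A 1]
  have harg₀ : 0 ≤ arg z := arg_nonneg_iff.mpr (by simp [z]; linarith [le_max_right A 1])
  have harg₁ : arg z ≤ π / 2 := arg_le_pi_div_two_iff.mpr (Or.inl (by simpa [z] using hγ))
  have hγz : ‖z‖ * Real.cos (arg z) = γ := by simp [z, norm_mul_cos_arg]
  calc ‖arcIntegral (fun s => exp (s * t) * f s) ‖z‖ (arg z) (2 * π - arg z)‖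
      ≤ ε / (C + 1) * ∫ θ in arg z..2 * π - arg z, ‖z‖ * Real.exp (‖z‖ * Real.cos θ * t) :=
        norm_arcIntegral_exp_mul_le (by linarith [Real.pi_pos]) hz.le fun θ =>
          hA _ (by rw [norm_circleMap_zero, abs_of_pos hz]; linarith [le_max_left A 1])
    _ ≤ ε / (C + 1) * C := by
        gcongr
        simpa [C, hγz] using Real.integral_mul_exp_mul_cos_le hz ht harg₀ harg₁
    _ < ε := by
        rw [div_mul_eq_mul_div, div_lt_iff₀ (by positivity)]
        nlinarith

/-- the Bromwich line integral of `e^{st} f̂(s)` along `Re s = γ`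
equals the contour integral along the positively oriented circle of radius `R`
centered at the origin. -/
theorem stmt_3 (R γ t : ℝ) (hR : 0 < R) (hγ : 0 ≤ γ) (ht : 0 < t)
    (fhat : ℂ → ℂ) (U : Set ℂ) (hU : IsOpen U)
    (hUsub : {s : ℂ | R ≤ ‖s‖} ∪ {s : ℂ | γ ≤ s.re} ⊆ U)
    (hdiff : DifferentiableOn ℂ fhat U)
    (hdecay : Tendsto fhat (Filter.comap (fun s : ℂ => ‖s‖) atTop) (nhds 0))
    (L : ℂ)
    (hL : Tendsto
        (fun T : ℝ => ∫ y in (-T)..T,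
          Complex.exp (((γ : ℂ) + Complex.I * (y : ℂ)) * (t : ℂ)) *
            fhat ((γ : ℂ) + Complex.I * (y : ℂ)) * Complex.I)
        atTop (nhds L)) :
    L = ∫ θ in (0:ℝ)..(2 * Real.pi),
          Complex.exp ((t : ℂ) * (R : ℂ) * Complex.exp (Complex.I * (θ : ℂ))) *
            fhat ((R : ℂ) * Complex.exp (Complex.I * (θ : ℂ))) *
            Complex.I * (R : ℂ) * Complex.exp (Complex.I * (θ : ℂ)) := by
  set g : ℂ → ℂ := fun s => exp (s * t) * fhat s
  have hg : DifferentiableOn ℂ g U :=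
    (by fun_prop : Differentiable ℂ fun s => exp (s * t)).differentiableOn.mul hdiff
  have hsegment : ∀ T : ℝ, ∫ y in (-T)..T, exp ((γ + I * y) * t) * fhat (γ + I * y) * I =
      ∫ y in (-T)..T, I • g (γ + I * y) :=
    fun T => intervalIntegral.integral_congr fun y _ => mul_comm _ _
  have hcircle : ∫ θ in (0 : ℝ)..2 * π,
      exp (t * R * exp (I * θ)) * fhat (R * exp (I * θ)) * I * R * exp (I * θ) =
        ∮ z in C(0, R), g z := by
    simp only [circleIntegral, deriv_circleMap, circleMap_zero, g, smul_eq_mul]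
    congr! 2 with θ
    ring_nf
  rw [hcircle]
  refine tendsto_nhds_unique (hL.congr hsegment) ?_
  have hsplit := fun T (hT : R ≤ T) =>
    integral_segment_eq_circleIntegral_sub_arcIntegral hR hU hUsub hg hT
  simpa only [sub_zero] using
    (tendsto_const_nhds.sub (tendsto_arcIntegral_left hγ ht hdecay)).congr'
      ((eventually_ge_atTop R).mono fun T hT => (hsplit T hT).symm)
end

section
/- Let r > 0, let g ∈ W, and let F : ℂ → ℂ be continuous on the circle {z ∈ ℂ : |z| = r}. Define f : (0,∞) → ℂ by f(t) = (1/(2πi))·∫_0^{2π} (r·e^{iθ})^{-2}·e^{t/(r·e^{iθ})}·F(r·e^{iθ})·i·r·e^{iθ} dθ. Then for every x ∈ [a,b]: ∫_a^x f(x−t)·g(t) dt = (1/(2πi))·∫_0^{2π} F(r·e^{iθ})·[ ((r·e^{iθ}·id − 𝒥)^{-1} g)(x) − g(x)/(r·e^{iθ}) ]·i·r·e^{iθ} dθ. -/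
open MeasureTheory intervalIntegral Complex Set

/-!
Fix `z ≠ 0` and let `R = (z·id − 𝒥)⁻¹ g`. The primitive `U = 𝒥 R` solves `z U' − U = g`,
`U(a) = 0`, so `(e^{-t/z} U)' = e^{-t/z} g / z` and
`R(x) − g(x)/z = U(x)/z = z⁻² ∫_a^x e^{(x−t)/z} g(t) dt`.
Multiplying by `F(z)` and integrating over the circle, the claim becomes Fubini's theorem for
the continuous integrand `(t, θ) ↦ z⁻² e^{(x−t)/z} F(z) g(t) dz/dθ` on `[a, x] × [0, 2π]`.
-/

theorem intervalIntegral_intervalIntegral_swap_of_continuous {E : Type*} [NormedAddCommGroup E]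
    [NormedSpace ℝ E] [CompleteSpace E] {f : ℝ → ℝ → E} (hf : Continuous (Function.uncurry f))
    (a b c d : ℝ) : ∫ x in a..b, ∫ y in c..d, f x y = ∫ y in c..d, ∫ x in a..b, f x y :=
  intervalIntegral_intervalIntegral_swap <|
    (hf.continuousOn.integrableOn_compact (isCompact_uIcc.prod isCompact_uIcc)).mono_set
      (prod_mono uIoc_subset_uIcc uIoc_subset_uIcc)

theorem continuous_inv_sq_mul_exp_div_mul {w Φ G : ℝ → ℂ} (hw : Continuous w) (hw0 : ∀ θ, w θ ≠ 0)
    (hΦ : Continuous Φ) (hG : Continuous G) (x : ℝ) :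
    Continuous fun p : ℝ × ℝ => (w p.2 ^ 2)⁻¹ * cexp ((x - p.1 : ℝ) / w p.2) * Φ p.2 * G p.1 := by
  fun_prop (disch := simp [hw0])

theorem sub_div_eq_integral_exp_of_mul_sub_integral_eq {a x : ℝ} {z : ℂ} {R G : ℝ → ℂ}
    (hz : z ≠ 0) (hR : Continuous R) (hG : Continuous G)
    (h : ∀ t ∈ uIcc a x, z * R t - ∫ s in a..t, R s = G t) :
    R x - G x / z = (z ^ 2)⁻¹ * ∫ t in a..x, cexp ((x - t : ℝ) / z) * G t := by
  set U : ℝ → ℂ := fun t => ∫ s in a..t, R s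
  have hU : ∀ t, HasDerivAt U (R t) t := fun t => (hR.integral_hasStrictDerivAt a t).hasDerivAt
  have hE : ∀ t : ℝ, HasDerivAt (fun t : ℝ => cexp (-t / z)) (cexp (-t / z) * (-1 / z)) t :=
    fun t => (((hasDerivAt_id (t : ℂ)).neg.div_const z).cexp).comp_ofReal
  have hderiv : ∀ t ∈ uIcc a x,
      HasDerivAt (fun t : ℝ => cexp (-t / z) * U t) (cexp (-t / z) * G t / z) t := by
    intro t ht
    refine ((hE t).mul (hU t)).congr_deriv ?_
    rw [← h t ht]
    field_simp
    ring
  have hFTC :=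
    integral_eq_sub_of_hasDerivAt hderiv (Continuous.intervalIntegrable (by fun_prop) _ _)
  have hexp : ∀ t : ℝ, cexp ((x - t : ℝ) / z) = cexp (x / z) * cexp (-t / z) := fun t => by
    rw [← Complex.exp_add]; push_cast; ring_nf
  have hinv : cexp (x / z) * cexp (-x / z) = 1 := by
    rw [← Complex.exp_add, neg_div, add_neg_cancel, Complex.exp_zero]
  simp only [U, integral_same, mul_zero, sub_zero, intervalIntegral.integral_div] at hFTC
  simp only [hexp, mul_assoc, intervalIntegral.integral_const_mul]
  rw [← div_mul_cancel₀ (∫ t in a..x, cexp (-t / z) * G t) hz, hFTC]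
  linear_combination (norm := skip) z⁻¹ * h x right_mem_uIcc - (∫ s in a..x, R s) / z * hinv
  field_simp
  ring

theorem resolvent_sub_div_eq_integral_exp {a b : ℝ} (hab : a ≤ b) {z : ℂ} (hz : z ≠ 0)
    (g R : C(Icc a b, ℂ))
    (hR : ∀ x : Icc a b, z * R x - ∫ t in a..(x : ℝ), IccExtend hab R t = g x) (x : Icc a b) :
    R x - g x / z =
      (z ^ 2)⁻¹ * ∫ t in a..(x : ℝ), cexp ((x - t : ℝ) / z) * IccExtend hab g t := by
  have hsub : uIcc a (x : ℝ) ⊆ Icc a b := by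
    rw [uIcc_of_le x.2.1]; exact Icc_subset_Icc_right x.2.2
  have key := sub_div_eq_integral_exp_of_mul_sub_integral_eq (G := IccExtend hab g) hz
    R.continuous.Icc_extend' g.continuous.Icc_extend' fun t ht => by
      simpa [IccExtend_of_mem hab _ (hsub ht)] using hR ⟨t, hsub ht⟩
  simpa [IccExtend_of_mem hab _ x.2] using key

/-- with `f(t) = (1/(2πi)) ∮_{|z|=r} z⁻² e^{t/z} F(z) dz`, the
indefinite convolution `∫_a^x f(x−t) g(t) dt` equals
`(1/(2πi)) ∮_{|z|=r} F(z) [((z·id − 𝒥)⁻¹ g)(x) − g(x)/z] dz`,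
both circle integrals written via the parametrization `z = r e^{iθ}`. -/
theorem stmt_5 (a b : ℝ) (hab : a < b) (r : ℝ) (hr : 0 < r)
    (g : C(Set.Icc a b, ℂ)) (F : ℂ → ℂ)
    (hF : ContinuousOn F (Metric.sphere (0 : ℂ) r))
    (Res : ℂ → C(Set.Icc a b, ℂ) → C(Set.Icc a b, ℂ))
    (hRes : ∀ z : ℂ, z ≠ 0 → ∀ u : C(Set.Icc a b, ℂ), ∀ x : Set.Icc a b,
      z * Res z u x - (∫ t in a..(x : ℝ), Set.IccExtend hab.le (⇑(Res z u)) t) = u x) :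
    ∀ x : Set.Icc a b,
      (∫ t in a..(x : ℝ),
          (fun τ : ℝ =>
              (2 * (Real.pi : ℂ) * Complex.I)⁻¹ *
                ∫ θ in (0:ℝ)..(2 * Real.pi),
                  (((r : ℂ) * Complex.exp (Complex.I * (θ : ℂ))) ^ 2)⁻¹ *
                    Complex.exp ((τ : ℂ) / ((r : ℂ) * Complex.exp (Complex.I * (θ : ℂ)))) *
                    F ((r : ℂ) * Complex.exp (Complex.I * (θ : ℂ))) *
                    Complex.I * (r : ℂ) * Complex.exp (Complex.I * (θ : ℂ)))
            ((x : ℝ) - t) * Set.IccExtend hab.le (⇑g) t)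
      = (2 * (Real.pi : ℂ) * Complex.I)⁻¹ *
          ∫ θ in (0:ℝ)..(2 * Real.pi),
            F ((r : ℂ) * Complex.exp (Complex.I * (θ : ℂ))) *
              (Res ((r : ℂ) * Complex.exp (Complex.I * (θ : ℂ))) g x -
                g x / ((r : ℂ) * Complex.exp (Complex.I * (θ : ℂ)))) *
              Complex.I * (r : ℂ) * Complex.exp (Complex.I * (θ : ℂ)) := by
  intro x
  set w : ℝ → ℂ := fun θ => r * cexp (I * θ)
  have hw0 : ∀ θ, w θ ≠ 0 := fun θ =>
    mul_ne_zero (ofReal_ne_zero.mpr hr.ne') (Complex.exp_ne_zero _)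
  have hFw : Continuous fun θ => F (w θ) :=
    hF.comp_continuous (by fun_prop) fun θ => by simp [w, Complex.norm_exp, abs_of_pos hr]
  have hΦ : Continuous fun θ => F (w θ) * I * r * cexp (I * θ) :=
    ((hFw.mul continuous_const).mul continuous_const).mul (by fun_prop)
  have hres : ∀ θ, Res (w θ) g x - g x / w θ =
      (w θ ^ 2)⁻¹ * ∫ t in a..(x : ℝ), cexp ((x - t : ℝ) / w θ) * IccExtend hab.le g t :=
    fun θ => resolvent_sub_div_eq_integral_exp hab.le (hw0 θ) g _ (hRes _ (hw0 θ) g) x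
  set K : ℝ → ℝ → ℂ := fun t θ => (w θ ^ 2)⁻¹ * cexp ((x - t : ℝ) / w θ) *
    (F (w θ) * I * r * cexp (I * θ)) * IccExtend hab.le g t
  have hK : Continuous (Function.uncurry K) := continuous_inv_sq_mul_exp_div_mul (by fun_prop) hw0
    hΦ g.continuous.Icc_extend' x
  calc _ = (2 * (Real.pi : ℂ) * I)⁻¹ * ∫ t in a..(x : ℝ), ∫ θ in (0 : ℝ)..2 * Real.pi, K t θ := by
        simp only [K, w, ← intervalIntegral.integral_const_mul,
          ← intervalIntegral.integral_mul_const, mul_assoc]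
    _ = (2 * (Real.pi : ℂ) * I)⁻¹ * ∫ θ in (0 : ℝ)..2 * Real.pi, ∫ t in a..(x : ℝ), K t θ := by
        rw [intervalIntegral_intervalIntegral_swap_of_continuous hK]
    _ = _ := by
        congr 1
        refine integral_congr fun θ _ => ?_
        rw [hres θ]
        simp only [K, ← intervalIntegral.integral_const_mul,
          ← intervalIntegral.integral_mul_const]
        exact integral_congr fun t _ => by ring
end

section
/- Let h > 0, let n ≥ 1 be an integer, and let t, y ∈ ℝ. Then Σ_{j=−n}^{n} | sinc( (t + iy − jh)/h ) | ≤ (2·cosh(πy/h)/π)·( π + 1 + log n ). -/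
/-!
With `x = t/h` and `s = y/h`, the `j`-th term is `|sinc (x - j + i s)|`. Since
`|sin w|² = sin² (Re w) + sinh² (Im w)` and `|sinh b| ≤ |b| cosh b`, one has
`|sinc z| ≤ cosh (π Im z) / max 1 (π |Re z|)`. Splitting the indices at the integer nearest
above `x`, the distances `|x - j|` on either side dominate `0, 1, 2, …`, so the sum is at most
`cosh (π s)` times `(1 + H_p / π) + (1 + H_q / π)` with `p + q ≤ 2n`. Concavity of the harmonic
numbers gives `H_p + H_q ≤ 2 H_n ≤ 2 (1 + log n)`.
-/

noncomputable section

/-- The normalized sinc function on `ℂ`: `sinc z = sin(πz)/(πz)` for `z ≠ 0`,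
`sinc 0 = 1`. -/
def csinc (z : ℂ) : ℂ :=
  if z = 0 then 1 else Complex.sin (Real.pi * z) / (Real.pi * z)

end

open Real Finset

theorem Real.sinh_le_mul_cosh {x : ℝ} (hx : 0 ≤ x) : sinh x ≤ x * cosh x := by
  calc sinh x = ∫ t in (0 : ℝ)..x, cosh t := by
        rw [intervalIntegral.integral_eq_sub_of_hasDerivAt (fun t _ => hasDerivAt_sinh t)
          (continuous_cosh.intervalIntegrable _ _), sinh_zero, sub_zero]
    _ ≤ ∫ _ in (0 : ℝ)..x, cosh x := by
      refine intervalIntegral.integral_mono_on hx (continuous_cosh.intervalIntegrable _ _)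
        intervalIntegrable_const fun t ht => ?_
      rw [cosh_le_cosh, abs_of_nonneg ht.1, abs_of_nonneg hx]
      exact ht.2
    _ = x * cosh x := by simp

theorem Real.abs_sinh_le_abs_mul_cosh (x : ℝ) : |sinh x| ≤ |x| * cosh x := by
  simpa [abs_sinh, cosh_abs] using sinh_le_mul_cosh (abs_nonneg x)

theorem Complex.sq_norm_sin (z : ℂ) : ‖sin z‖ ^ 2 = Real.sin z.re ^ 2 + Real.sinh z.im ^ 2 := by
  rw [sin_eq z, Complex.sq_norm, Complex.normSq_apply]
  simp only [← ofReal_sin, ← ofReal_cos, ← ofReal_cosh, ← ofReal_sinh, add_re, add_im, mul_re,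
    mul_im, ofReal_re, ofReal_im, I_re, I_im]
  linear_combination
    Real.sin z.re ^ 2 * cosh_sq' z.im + Real.sinh z.im ^ 2 * Real.sin_sq_add_cos_sq z.re

theorem Complex.norm_sin_le_cosh_im (z : ℂ) : ‖sin z‖ ≤ Real.cosh z.im := by
  refine (pow_le_pow_iff_left₀ (norm_nonneg _) (cosh_pos _).le two_ne_zero).mp ?_
  rw [sq_norm_sin, cosh_sq']
  linarith [Real.sin_sq_le_one z.re]

theorem Complex.norm_sin_le_norm_mul_cosh_im (z : ℂ) : ‖sin z‖ ≤ ‖z‖ * Real.cosh z.im := by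
  refine (pow_le_pow_iff_left₀ (norm_nonneg _) (by positivity) two_ne_zero).mp ?_
  have hsinh : Real.sinh z.im ^ 2 ≤ z.im ^ 2 * Real.cosh z.im ^ 2 := by
    simpa [mul_pow] using pow_le_pow_left₀ (abs_nonneg _) (abs_sinh_le_abs_mul_cosh z.im) 2
  have hcosh : 1 ≤ Real.cosh z.im ^ 2 := one_le_pow₀ (one_le_cosh _)
  rw [sq_norm_sin, mul_pow, Complex.sq_norm, Complex.normSq_apply]
  nlinarith [sin_sq_le_sq (x := z.re), sq_nonneg z.re]

theorem norm_csinc_le (z : ℂ) : ‖csinc z‖ ≤ Real.cosh (π * z.im) / max 1 (π * |z.re|) := by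
  rcases eq_or_ne z 0 with rfl | hz
  · simp [csinc]
  have hnorm : ‖(π : ℂ) * z‖ = π * ‖z‖ := by simp [abs_of_pos pi_pos]
  have him : ((π : ℂ) * z).im = π * z.im := by simp
  have hz' : 0 < ‖z‖ := norm_pos_iff.mpr hz
  rw [csinc, if_neg hz, norm_div, hnorm, div_le_div_iff₀ (by positivity) (by positivity)]
  rcases le_total 1 (π * |z.re|) with h | h
  · rw [max_eq_right h]
    have := Complex.norm_sin_le_cosh_im (π * z)
    rw [him] at this
    have hre : π * |z.re| ≤ π * ‖z‖ := by gcongr; exact Complex.abs_re_le_norm z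
    exact mul_le_mul this hre (by positivity) (cosh_pos _).le
  · have := Complex.norm_sin_le_norm_mul_cosh_im (π * z)
    rw [him, hnorm] at this
    rw [max_eq_left h]
    linarith

theorem Finset.sum_range_abs_sub_le {φ : ℝ → ℝ} (hφ : AntitoneOn φ (Set.Ici 0)) (u : ℝ) (N : ℕ) :
    ∃ c ≤ N, ∑ k ∈ range N, φ |u - k| ≤ ∑ i ∈ range c, φ i + ∑ i ∈ range (N - c), φ i := by
  have hφ' (i : ℕ) {d : ℝ} (hid : (i : ℝ) ≤ d) : φ d ≤ φ i :=
    hφ (Set.mem_Ici.mpr (Nat.cast_nonneg' i)) (Set.mem_Ici.mpr ((Nat.cast_nonneg' i).trans hid)) hid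
  set c := min N ⌈u⌉₊
  have hcN : c ≤ N := min_le_left _ _
  refine ⟨c, hcN, ?_⟩
  rw [← Nat.add_sub_cancel' hcN, sum_range_add, Nat.add_sub_cancel_left,
    ← sum_range_reflect (fun i : ℕ => φ i) c]
  refine add_le_add (sum_le_sum fun k hk => hφ' _ ?_) (sum_le_sum fun i hi => hφ' _ ?_)
  · have hkc := mem_range.mp hk
    have hku : (k : ℝ) < u := Nat.lt_ceil.mp (hkc.trans_le (min_le_right _ _))
    have hcu : (c : ℝ) < u + 1 := (Nat.cast_le.mpr (min_le_right _ _)).trans_lt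
      (Nat.ceil_lt_add_one ((Nat.cast_nonneg' k).trans hku.le))
    rw [Nat.cast_sub (by omega), Nat.cast_sub (by omega), abs_of_pos (by linarith)]
    push_cast
    linarith
  · have hci : c = ⌈u⌉₊ := by have := mem_range.mp hi; omega
    have hu : u ≤ c := hci ▸ Nat.le_ceil u
    push_cast
    rw [abs_sub_comm, abs_of_nonneg (by linarith)]
    linarith

theorem sum_range_inv_max_one_pi_mul_le (M : ℕ) :
    ∑ i ∈ range M, (max 1 (π * i))⁻¹ ≤ 1 + harmonic (M - 1) / π := by
  cases M with
  | zero => simp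
  | succ m =>
    refine le_of_eq ?_
    have hterm (i : ℕ) : (max 1 (π * (i + 1 : ℕ)))⁻¹ = ((i + 1 : ℕ) : ℝ)⁻¹ / π := by
      rw [max_eq_right (by push_cast; nlinarith [pi_gt_three, (Nat.cast_nonneg' i : (0 : ℝ) ≤ i)]),
        mul_inv, div_eq_mul_inv, mul_comm]
    simp only [sum_range_succ', hterm, Nat.cast_zero, mul_zero, max_eq_left zero_le_one, inv_one,
      Nat.add_sub_cancel, harmonic, Rat.cast_sum, ← sum_div]
    push_cast
    ring

theorem harmonic_mono : Monotone harmonic :=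
  monotone_nat_of_le_succ fun n => by
    rw [harmonic_succ]
    exact le_add_of_nonneg_right (by positivity)

theorem harmonic_add_harmonic_add_two_mul_le (a d : ℕ) :
    harmonic a + harmonic (a + 2 * d) ≤ 2 * harmonic (a + d) := by
  induction d generalizing a with
  | zero => simp [two_mul]
  | succ d ih =>
    have key := ih (a + 1)
    rw [harmonic_succ a] at key
    rw [show a + 2 * (d + 1) = a + 1 + 2 * d + 1 by ring, harmonic_succ,
      show a + (d + 1) = a + 1 + d by ring]
    have : ((a + 1 + 2 * d + 1 : ℕ) : ℚ)⁻¹ ≤ ((a + 1 : ℕ) : ℚ)⁻¹ :=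
      inv_anti₀ (by positivity) (by exact_mod_cast (by omega))
    linarith

theorem harmonic_add_harmonic_le {p q n : ℕ} (h : p + q ≤ 2 * n) :
    harmonic p + harmonic q ≤ 2 * harmonic n := by
  wlog hpq : p ≤ q generalizing p q
  · rw [add_comm]
    exact this (by omega) (by omega)
  obtain ⟨d, rfl⟩ : ∃ d, n = p + d := ⟨n - p, by omega⟩
  calc harmonic p + harmonic q ≤ harmonic p + harmonic (p + 2 * d) := by
        gcongr
        exact harmonic_mono (by omega)
    _ ≤ 2 * harmonic (p + d) := harmonic_add_harmonic_add_two_mul_le p d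

theorem Finset.sum_Icc_neg_natCast {M : Type*} [AddCommMonoid M] (f : ℤ → M) (n : ℕ) :
    ∑ j ∈ Icc (-(n : ℤ)) n, f j = ∑ k ∈ range (2 * n + 1), f (k - n) :=
  sum_nbij' (fun j => (j + n).toNat) (fun k => (k : ℤ) - n)
    (fun j hj => by simp only [mem_Icc, mem_range] at *; omega)
    (fun k hk => by simp only [mem_Icc, mem_range] at *; omega)
    (fun j hj => by simp only [mem_Icc] at *; omega)
    (fun k hk => by omega)
    (fun j hj => by simp only [mem_Icc] at hj; congr; omega)

theorem one_add_harmonic_div_pi_add_le {p q n : ℕ} (h : p + q ≤ 2 * n) :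
    (1 + harmonic p / π) + (1 + harmonic q / π) ≤ 2 / π * (π + 1 + log n) := by
  have hsum : (harmonic p + harmonic q : ℝ) ≤ 2 * (1 + log n) := by
    have hpq : (harmonic p + harmonic q : ℝ) ≤ 2 * harmonic n := by
      exact_mod_cast harmonic_add_harmonic_le h
    linarith [harmonic_le_one_add_log n]
  calc (1 + harmonic p / π) + (1 + harmonic q / π) = 2 + (harmonic p + harmonic q : ℝ) / π := by
        ring
    _ ≤ 2 + 2 * (1 + log n) / π := by gcongr
    _ = 2 / π * (π + 1 + log n) := by field_simp; ring

theorem norm_csinc_sample_le {h : ℝ} (hh : h ≠ 0) (t y : ℝ) (j : ℤ) :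
    ‖csinc (((t : ℂ) + Complex.I * y - j * h) / h)‖
      ≤ cosh (π * y / h) / max 1 (π * |t / h - j|) := by
  have hre : (((t : ℂ) + Complex.I * y - j * h) / h).re = t / h - j := by
    simp [Complex.div_ofReal_re]
    field_simp
  have him : (((t : ℂ) + Complex.I * y - j * h) / h).im = y / h := by
    simp [Complex.div_ofReal_im]
  simpa [hre, him, mul_div_assoc] using norm_csinc_le (((t : ℂ) + Complex.I * y - j * h) / h)

theorem stmt_6_general (h : ℝ) (hh : 0 < h) (n : ℕ) (t y : ℝ) :
    ∑ j ∈ Finset.Icc (-(n : ℤ)) (n : ℤ),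
        ‖csinc (((t : ℂ) + Complex.I * (y : ℂ) - (j : ℂ) * (h : ℂ)) / (h : ℂ))‖
      ≤ 2 * Real.cosh (Real.pi * y / h) / Real.pi * (Real.pi + 1 + Real.log n) := by
  set φ : ℝ → ℝ := fun d => (max 1 (π * d))⁻¹
  have hφ : AntitoneOn φ (Set.Ici 0) := fun _ _ _ _ hab =>
    inv_anti₀ (one_pos.trans_le (le_max_left _ _)) (max_le_max le_rfl (by gcongr))
  set C := cosh (π * y / h)
  obtain ⟨c, hcN, hsplit⟩ := sum_range_abs_sub_le hφ (t / h + n) (2 * n + 1)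
  calc _ ≤ ∑ j ∈ Icc (-(n : ℤ)) n, C * φ |t / h - j| :=
        sum_le_sum fun j _ => norm_csinc_sample_le hh.ne' t y j
    _ = C * ∑ k ∈ range (2 * n + 1), φ |t / h + n - k| := by
        rw [← mul_sum, sum_Icc_neg_natCast]
        congr 1
        refine sum_congr rfl fun k _ => ?_
        push_cast
        ring_nf
    _ ≤ C * (2 / π * (π + 1 + log n)) := by
        gcongr
        exact hsplit.trans <| (add_le_add (sum_range_inv_max_one_pi_mul_le _)
          (sum_range_inv_max_one_pi_mul_le _)).trans (one_add_harmonic_div_pi_add_le (by omega))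
    _ = _ := by ring

/-- bound on the sum of `|sinc((t + iy - jh)/h)|`. -/
theorem stmt_6 (h : ℝ) (hh : 0 < h) (n : ℕ) (hn : 1 ≤ n) (t y : ℝ) :
    ∑ j ∈ Finset.Icc (-(n : ℤ)) (n : ℤ),
        ‖csinc (((t : ℂ) + Complex.I * (y : ℂ) - (j : ℂ) * (h : ℂ)) / (h : ℂ))‖
      ≤ 2 * Real.cosh (Real.pi * y / h) / Real.pi * (Real.pi + 1 + Real.log n) :=
  stmt_6_general h hh n t y
end

section
/- Let a < b be real numbers, let n be a positive integer, let h > 0, let z ∈ ℂ with z ≠ 0, and let v ∈ W. Then the following are equivalent: (A) there exists a unique u ∈ W with z·u − 𝒥_m u = v; (B) there exists a unique vector c ∈ ℂ^m with (z·I_m − A_m)·c = V_m v, where I_m is the m×m identity matrix. -/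
open MeasureTheory Set

noncomputable section

/-- The normalized sinc function on `ℝ`. -/
def rsinc (x : ℝ) : ℝ := if x = 0 then 1 else Real.sin (Real.pi * x) / (Real.pi * x)

/-- `δ_k = 1/2 + ∫_0^k sinc(t) dt`. -/
def deltaK (k : ℤ) : ℝ := 1 / 2 + ∫ t in (0:ℝ)..(k:ℝ), rsinc t

/-- The single-exponential (SE) transformation. -/
def psiSE (a b u : ℝ) : ℝ := (b - a) / 2 * Real.tanh (u / 2) + (b + a) / 2

/-- Derivative of the SE transformation. -/
def psiSE' (a b u : ℝ) : ℝ := (b - a) / (4 * Real.cosh (u / 2) ^ 2)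

/-- Inverse of the SE transformation. -/
def phiSE (a b x : ℝ) : ℝ := Real.log ((x - a) / (b - x))

/-- The double-exponential (DE) transformation. -/
def psiDE (a b u : ℝ) : ℝ :=
  (b - a) / 2 * Real.tanh (Real.pi / 2 * Real.sinh u) + (b + a) / 2

/-- Derivative of the DE transformation. -/
def psiDE' (a b u : ℝ) : ℝ :=
  (b - a) * Real.pi / 4 * Real.cosh u / Real.cosh (Real.pi / 2 * Real.sinh u) ^ 2

/-- The inverse hyperbolic tangent (not available in Mathlib). -/
def artanh (x : ℝ) : ℝ := 1 / 2 * Real.log ((1 + x) / (1 - x))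

/-- Inverse of the DE transformation. -/
def phiDE (a b x : ℝ) : ℝ :=
  Real.arsinh (2 / Real.pi * artanh ((2 * x - a - b) / (b - a)))

/-- The sinc basis term `sinc((φ(x) - kh)/h)`, interpreted as `0` at the endpoints
`x = a` and `x = b` (continuous extension). -/
def sincTerm (a b : ℝ) (phi : ℝ → ℝ) (h : ℝ) (k : ℤ) (x : ℝ) : ℝ :=
  if x = a ∨ x = b then 0 else rsinc ((phi x - (k : ℝ) * h) / h)

/-- The basis functions `ω_i`, `i ∈ {-n, …, n}`. -/
def omegaF (a b : ℝ) (psi phi : ℝ → ℝ) (n : ℕ) (h : ℝ) (i : ℤ) (x : ℝ) : ℝ :=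
  if i = -(n : ℤ) then
    (1 / ((b - psi (-(n : ℝ) * h)) / (b - a))) *
      ((b - x) / (b - a) -
        ∑ k ∈ Finset.Icc (-(n : ℤ) + 1) (n : ℤ),
          (b - psi ((k : ℝ) * h)) / (b - a) * sincTerm a b phi h k x)
  else if i = (n : ℤ) then
    (1 / ((psi ((n : ℝ) * h) - a) / (b - a))) *
      ((x - a) / (b - a) -
        ∑ k ∈ Finset.Icc (-(n : ℤ)) ((n : ℤ) - 1),
          (psi ((k : ℝ) * h) - a) / (b - a) * sincTerm a b phi h k x)
  else sincTerm a b phi h i x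

/-- The Sinc indefinite integration operator, as a pointwise formula:
`(𝒥_m g)(x) = Σ_i (h Σ_j δ_{i-j} g(ψ(jh)) ψ'(jh)) ω_i(x)`. -/
def JmF (a b : ℝ) (psi psi' phi : ℝ → ℝ) (n : ℕ) (h : ℝ) (g : ℝ → ℂ) (x : ℝ) : ℂ :=
  ∑ i ∈ Finset.Icc (-(n : ℤ)) (n : ℤ),
    ((h : ℂ) * ∑ j ∈ Finset.Icc (-(n : ℤ)) (n : ℤ),
        (deltaK (i - j) : ℂ) * g (psi ((j : ℝ) * h)) * (psi' ((j : ℝ) * h) : ℂ)) *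
      (omegaF a b psi phi n h i x : ℂ)

/-- The `m × m` matrix `A_m`, `(A_m)_{ij} = h δ_{i-j} ψ'(jh)`, indices shifted to
`Fin (2n+1)`. -/
def AmF (psi' : ℝ → ℝ) (n : ℕ) (h : ℝ) : Matrix (Fin (2*n+1)) (Fin (2*n+1)) ℂ :=
  Matrix.of fun i j =>
    ((h * deltaK ((((i : ℕ) : ℤ) - (n : ℤ)) - (((j : ℕ) : ℤ) - (n : ℤ))) *
        psi' ((((((j : ℕ) : ℤ) - (n : ℤ)) : ℤ) : ℝ) * h) : ℝ) : ℂ)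

/-- The strip `D_d = {ζ : |Im ζ| < d}`. -/
def strip (d : ℝ) : Set ℂ := {z : ℂ | |z.im| < d}

/-- Holomorphic extension of the SE transformation. -/
def psiSEC (a b : ℝ) (z : ℂ) : ℂ :=
  ((b - a) / 2 : ℂ) * Complex.tanh (z / 2) + ((b + a) / 2 : ℂ)

/-- The image `ψ(D_d)` of the strip under the SE transformation. -/
def seDomain (a b d : ℝ) : Set ℂ := psiSEC a b '' strip d

end

/-! The operator `𝒥_m` only sees the samples `V_m u = (u(ψ(jh)))_j`: it is `u ↦ K (A_m V_m u)`,
where `K c = Σ_i c_i ω_i`. The basis `ω_i` is cardinal at the Sinc points, `ω_i(ψ(jh)) = δ_ij`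
(and continuous on `[a,b]` because sinc decays at `±∞` while `φ` blows up at the endpoints), so
`V_m ∘ K = id`. Hence `u ↦ V_m u` maps solutions of `z u - 𝒥_m u = v` to solutions of
`(z I - A_m) c = V_m v`, with inverse `c ↦ z⁻¹ (v + K (A_m c))`, and the two equations have the
same number of solutions. -/

open Filter Topology Matrix

theorem continuousOn_Icc_of_continuousOn_Ioo {α β : Type*} [LinearOrder α] [TopologicalSpace α]
    [OrderTopology α] [TopologicalSpace β] {f : α → β} {a b : α}
    (hf : ContinuousOn f (Ioo a b)) (ha : ContinuousWithinAt f (Ioi a) a)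
    (hb : ContinuousWithinAt f (Iio b) b) : ContinuousOn f (Icc a b) := by
  intro x hx
  rcases hx.1.eq_or_lt with rfl | hax
  · exact (continuousWithinAt_Ioi_iff_Ici.1 ha).mono Icc_subset_Ici_self
  rcases hx.2.eq_or_lt with rfl | hxb
  · exact (continuousWithinAt_Iio_iff_Iic.1 hb).mono Icc_subset_Iic_self
  · exact (hf.continuousAt (Ioo_mem_nhds hax hxb)).continuousWithinAt

theorem tendsto_sub_div_cocompact (c : ℝ) {h : ℝ} (hh : h ≠ 0) :
    Tendsto (fun t : ℝ => (t - c) / h) (cocompact ℝ) (cocompact ℝ) :=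
  ((Homeomorph.subRight c).trans (Homeomorph.mulRight₀ h⁻¹ (inv_ne_zero hh))).isClosedEmbedding
    |>.tendsto_cocompact

theorem rsinc_eq_sinc (x : ℝ) : rsinc x = Real.sinc (Real.pi * x) := by
  rcases eq_or_ne x 0 with rfl | hx
  · simp [rsinc]
  · rw [rsinc, if_neg hx, Real.sinc_of_ne_zero (mul_ne_zero Real.pi_ne_zero hx)]

theorem continuous_rsinc : Continuous rsinc := by
  simp_rw [funext rsinc_eq_sinc]
  fun_prop

theorem rsinc_intCast (m : ℤ) : rsinc m = if m = 0 then 1 else 0 := by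
  rcases eq_or_ne m 0 with rfl | hm
  · simp [rsinc]
  · rw [rsinc, if_neg (Int.cast_ne_zero.2 hm), if_neg hm, mul_comm, Real.sin_int_mul_pi,
      zero_div]

theorem Real.tendsto_sinc_cocompact : Tendsto Real.sinc (cocompact ℝ) (𝓝 0) := by
  refine squeeze_zero_norm' ?_ tendsto_norm_cocompact_atTop.inv_tendsto_atTop
  filter_upwards [tendsto_norm_cocompact_atTop.eventually_gt_atTop 0] with y hy
  rw [Pi.inv_apply, Real.sinc_of_ne_zero (norm_pos_iff.1 hy), norm_div, div_le_iff₀ hy,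
    inv_mul_cancel₀ hy.ne']
  exact Real.abs_sin_le_one y

theorem tendsto_rsinc_cocompact : Tendsto rsinc (cocompact ℝ) (𝓝 0) := by
  simp_rw [funext rsinc_eq_sinc]
  exact Real.tendsto_sinc_cocompact.comp
    (tendsto_cocompact_mul_left (inv_mul_cancel₀ Real.pi_ne_zero))

section SingleExponential

variable {a b : ℝ}

theorem psiSE_sub_left (a b u : ℝ) :
    psiSE a b u - a = (b - a) * Real.exp (u / 2) / (2 * Real.cosh (u / 2)) := by
  rw [psiSE, Real.tanh_eq_sinh_div_cosh, ← Real.cosh_add_sinh]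
  field_simp [(Real.cosh_pos (u / 2)).ne']
  ring

theorem sub_psiSE (a b u : ℝ) :
    b - psiSE a b u = (b - a) * Real.exp (-(u / 2)) / (2 * Real.cosh (u / 2)) := by
  rw [psiSE, Real.tanh_eq_sinh_div_cosh, ← Real.cosh_sub_sinh]
  field_simp [(Real.cosh_pos (u / 2)).ne']
  ring

theorem psiSE_mem_Ioo (hab : a < b) (u : ℝ) : psiSE a b u ∈ Ioo a b := by
  have hba : 0 < b - a := sub_pos.2 hab
  refine ⟨sub_pos.1 ?_, sub_pos.1 ?_⟩
  · rw [psiSE_sub_left]; positivity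
  · rw [sub_psiSE]; positivity

theorem phiSE_psiSE (hab : a < b) (u : ℝ) : phiSE a b (psiSE a b u) = u := by
  have hba : 0 < b - a := sub_pos.2 hab
  rw [phiSE, psiSE_sub_left, sub_psiSE, div_div_div_cancel_right₀ (by positivity),
    mul_div_mul_left _ _ hba.ne', ← Real.exp_sub, Real.log_exp]
  ring

theorem continuousOn_phiSE : ContinuousOn (phiSE a b) (Ioo a b) := by
  refine ContinuousOn.log ?_ fun x hx => (div_pos (sub_pos.2 hx.1) (sub_pos.2 hx.2)).ne'
  exact (continuousOn_id.sub continuousOn_const).div (continuousOn_const.sub continuousOn_id)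
    fun x hx => (sub_pos.2 hx.2).ne'

theorem tendsto_phiSE_nhdsGT (hab : a < b) : Tendsto (phiSE a b) (𝓝[>] a) atBot := by
  refine Real.tendsto_log_nhdsGT_zero.comp (tendsto_nhdsWithin_iff.2 ⟨?_, ?_⟩)
  · have hcont : ContinuousAt (fun x => (x - a) / (b - x)) a :=
      (continuousAt_id.sub continuousAt_const).div (continuousAt_const.sub continuousAt_id)
        (sub_pos.2 hab).ne'
    simpa using hcont.tendsto.mono_left nhdsWithin_le_nhds
  · filter_upwards [Ioo_mem_nhdsGT hab] with x hx
    exact div_pos (sub_pos.2 hx.1) (sub_pos.2 hx.2)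

theorem tendsto_phiSE_nhdsLT (hab : a < b) : Tendsto (phiSE a b) (𝓝[<] b) atTop := by
  refine Real.tendsto_log_atTop.comp (Tendsto.pos_mul_atTop (sub_pos.2 hab) ?_ ?_)
  · exact ((continuous_sub_right a).tendsto' b (b - a) rfl).mono_left nhdsWithin_le_nhds
  · refine tendsto_inv_nhdsGT_zero.comp (tendsto_nhdsWithin_iff.2 ⟨?_, ?_⟩)
    · exact ((continuous_sub_left b).tendsto' b 0 (sub_self b)).mono_left nhdsWithin_le_nhds
    · filter_upwards [Ioo_mem_nhdsLT hab] with x hx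
      exact sub_pos.2 hx.2

end SingleExponential

section SincBasis

variable {a b h : ℝ}

theorem sincTerm_of_mem_Ioo {phi : ℝ → ℝ} {k : ℤ} {x : ℝ} (hx : x ∈ Ioo a b) :
    sincTerm a b phi h k x = rsinc ((phi x - k * h) / h) :=
  if_neg fun hend => hend.elim hx.1.ne' hx.2.ne

theorem continuousOn_sincTerm (hab : a < b) (hh : h ≠ 0) (k : ℤ) :
    ContinuousOn (sincTerm a b (phiSE a b) h k) (Icc a b) := by
  set g : ℝ → ℝ := fun t => rsinc ((t - k * h) / h)
  have hg : Tendsto g (cocompact ℝ) (𝓝 0) :=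
    tendsto_rsinc_cocompact.comp (tendsto_sub_div_cocompact _ hh)
  have heq : EqOn (g ∘ phiSE a b) (sincTerm a b (phiSE a b) h k) (Ioo a b) :=
    fun x hx => (sincTerm_of_mem_Ioo hx).symm
  refine continuousOn_Icc_of_continuousOn_Ioo ?_ ?_ ?_
  · exact ((continuous_rsinc.comp ((continuous_sub_right _).div_const h)).comp_continuousOn
      continuousOn_phiSE).congr heq.symm
  · rw [ContinuousWithinAt, sincTerm, if_pos (Or.inl rfl)]
    exact (hg.comp ((tendsto_phiSE_nhdsGT hab).mono_right atBot_le_cocompact)).congr'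
      (heq.eventuallyEq_of_mem (Ioo_mem_nhdsGT hab))
  · rw [ContinuousWithinAt, sincTerm, if_pos (Or.inr rfl)]
    exact (hg.comp ((tendsto_phiSE_nhdsLT hab).mono_right atTop_le_cocompact)).congr'
      (heq.eventuallyEq_of_mem (Ioo_mem_nhdsLT hab))

theorem sincTerm_psiSE (hab : a < b) (hh : h ≠ 0) (k j : ℤ) :
    sincTerm a b (phiSE a b) h k (psiSE a b (j * h)) = if k = j then 1 else 0 := by
  rw [sincTerm_of_mem_Ioo (psiSE_mem_Ioo hab _), phiSE_psiSE hab, ← sub_mul,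
    mul_div_cancel_right₀ _ hh, ← Int.cast_sub, rsinc_intCast]
  simp only [sub_eq_zero, eq_comm]

theorem sum_mul_sincTerm_psiSE (hab : a < b) (hh : h ≠ 0) (s : Finset ℤ) (c : ℤ → ℝ) (j : ℤ) :
    ∑ k ∈ s, c k * sincTerm a b (phiSE a b) h k (psiSE a b (j * h)) =
      if j ∈ s then c j else 0 := by
  simp only [sincTerm_psiSE hab hh, mul_ite, mul_one, mul_zero, Finset.sum_ite_eq']

theorem continuousOn_omegaF (psi : ℝ → ℝ) (hab : a < b) (hh : h ≠ 0) (n : ℕ) (i : ℤ) :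
    ContinuousOn (omegaF a b psi (phiSE a b) n h i) (Icc a b) := by
  have hsum : ∀ (s : Finset ℤ) (c : ℤ → ℝ),
      ContinuousOn (fun x => ∑ k ∈ s, c k * sincTerm a b (phiSE a b) h k x) (Icc a b) :=
    fun s c => continuousOn_finsetSum s fun k _ =>
      continuousOn_const.mul (continuousOn_sincTerm hab hh k)
  unfold omegaF
  split_ifs
  · exact continuousOn_const.mul
      (((continuousOn_const.sub continuousOn_id).div_const _).sub (hsum _ _))
  · exact continuousOn_const.mul
      (((continuousOn_id.sub continuousOn_const).div_const _).sub (hsum _ _))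
  · exact continuousOn_sincTerm hab hh i

theorem omegaF_psiSE (hab : a < b) (hh : h ≠ 0) {n : ℕ} (i : ℤ) {j : ℤ}
    (hj : j ∈ Finset.Icc (-(n : ℤ)) n) :
    omegaF a b (psiSE a b) (phiSE a b) n h i (psiSE a b (j * h)) = if i = j then 1 else 0 := by
  simp only [Finset.mem_Icc] at hj
  have hba : b - a ≠ 0 := (sub_pos.2 hab).ne'
  have hb : ∀ u, b - psiSE a b u ≠ 0 := fun u => (sub_pos.2 (psiSE_mem_Ioo hab u).2).ne'
  have ha : ∀ u, psiSE a b u - a ≠ 0 := fun u => (sub_pos.2 (psiSE_mem_Ioo hab u).1).ne'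
  unfold omegaF
  -- the sums must be evaluated before `sincTerm_psiSE` rewrites their summands
  simp only [sum_mul_sincTerm_psiSE hab hh, Finset.mem_Icc]
  simp only [sincTerm_psiSE hab hh]
  split_ifs <;> try first | omega | rfl | simp only [sub_self, mul_zero]
  · obtain rfl : j = -n := by omega
    rw [sub_zero, Int.cast_neg, Int.cast_natCast, one_div, inv_mul_cancel₀ (div_ne_zero (hb _) hba)]
  · obtain rfl : j = n := by omega
    rw [sub_zero, Int.cast_natCast, one_div, inv_mul_cancel₀ (div_ne_zero (ha _) hba)]

end SincBasis

theorem existsUnique_smul_sub_eq_iff_existsUnique_mulVec_eq {𝕜 W ι : Type*} [Field 𝕜]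
    [AddCommGroup W] [Module 𝕜 W] [Fintype ι] [DecidableEq ι] (S : W →ₗ[𝕜] ι → 𝕜)
    (K : (ι → 𝕜) → W) (hSK : ∀ c, S (K c) = c) (A : Matrix ι ι 𝕜) {z : 𝕜} (hz : z ≠ 0)
    (v : W) :
    (∃! u, z • u - K (A *ᵥ S u) = v) ↔ ∃! c, (z • 1 - A) *ᵥ c = S v := by
  have smul_one_sub_mulVec : ∀ c, (z • 1 - A) *ᵥ c = z • c - A *ᵥ c := fun c => by
    rw [Matrix.sub_mulVec, Matrix.smul_mulVec, Matrix.one_mulVec]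
  have sys_of_sol : ∀ u, z • u - K (A *ᵥ S u) = v → (z • 1 - A) *ᵥ S u = S v := by
    rintro u rfl
    rw [map_sub, hSK, map_smul, smul_one_sub_mulVec]
  have eq_of_sol : ∀ u, z • u - K (A *ᵥ S u) = v → u = z⁻¹ • (v + K (A *ᵥ S u)) := by
    rintro u rfl
    rw [sub_add_cancel, inv_smul_smul₀ hz]
  have sample_of_sys : ∀ c, (z • 1 - A) *ᵥ c = S v → S (z⁻¹ • (v + K (A *ᵥ c))) = c := by
    intro c hc
    rw [map_smul, map_add, hSK, ← hc, smul_one_sub_mulVec, sub_add_cancel, inv_smul_smul₀ hz]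
  have sol_of_sys : ∀ c, (z • 1 - A) *ᵥ c = S v →
      z • (z⁻¹ • (v + K (A *ᵥ c))) - K (A *ᵥ S (z⁻¹ • (v + K (A *ᵥ c)))) = v := by
    intro c hc
    rw [sample_of_sys c hc, smul_inv_smul₀ hz, add_sub_cancel_right]
  constructor
  · rintro ⟨u, hu, huniq⟩
    refine ⟨S u, sys_of_sol u hu, fun c hc => ?_⟩
    rw [← sample_of_sys c hc, huniq _ (sol_of_sys c hc)]
  · rintro ⟨c, hc, cuniq⟩
    refine ⟨_, sol_of_sys c hc, fun u hu => ?_⟩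
    rw [eq_of_sol u hu, cuniq _ (sys_of_sol u hu)]

theorem sum_Icc_neg_eq_sum_fin {M : Type*} [AddCommMonoid M] (n : ℕ) (f : ℤ → M) :
    ∑ i ∈ Finset.Icc (-(n : ℤ)) n, f i = ∑ j : Fin (2 * n + 1), f ((j : ℕ) - n) := by
  refine (Finset.sum_bij (fun (j : Fin (2 * n + 1)) _ => ((j : ℕ) : ℤ) - n) ?_ ?_ ?_
    fun _ _ => rfl).symm
  · intro j _
    have := j.isLt
    simp only [Finset.mem_Icc]
    omega
  · intro j₁ _ j₂ _ hj
    ext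
    omega
  · intro i hi
    simp only [Finset.mem_Icc] at hi
    exact ⟨⟨(i + n).toNat, by omega⟩, Finset.mem_univ _, by simp only; omega⟩

noncomputable section SESincIntegration

variable {a b h : ℝ}

def seSample (hab : a ≤ b) (n : ℕ) (h : ℝ) : C(Icc a b, ℂ) →ₗ[ℂ] Fin (2 * n + 1) → ℂ where
  toFun u j := IccExtend hab u (psiSE a b ((((j : ℕ) : ℤ) - n : ℤ) * h))
  map_add' _ _ := rfl
  map_smul' _ _ := rfl

theorem seSample_apply (hab : a ≤ b) (n : ℕ) (h : ℝ) (u : C(Icc a b, ℂ)) (j : Fin (2 * n + 1)) :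
    seSample hab n h u j = IccExtend hab u (psiSE a b ((((j : ℕ) : ℤ) - n : ℤ) * h)) :=
  rfl

def seOmega (hab : a < b) (hh : h ≠ 0) (n : ℕ) (i : ℤ) : C(Icc a b, ℂ) where
  toFun x := omegaF a b (psiSE a b) (phiSE a b) n h i x
  continuous_toFun :=
    (Complex.continuous_ofReal.comp_continuousOn (continuousOn_omegaF _ hab hh n i)).domRestrict

def seInterp (hab : a < b) (hh : h ≠ 0) (n : ℕ) (c : Fin (2 * n + 1) → ℂ) : C(Icc a b, ℂ) :=
  ∑ j, c j • seOmega hab hh n (((j : ℕ) : ℤ) - n)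

theorem seInterp_apply (hab : a < b) (hh : h ≠ 0) (n : ℕ) (c : Fin (2 * n + 1) → ℂ)
    (x : Icc a b) :
    seInterp hab hh n c x =
      ∑ j, c j * omegaF a b (psiSE a b) (phiSE a b) n h (((j : ℕ) : ℤ) - n) x := by
  simp only [seInterp, ContinuousMap.coe_sum, Finset.sum_apply, ContinuousMap.coe_smul,
    Pi.smul_apply, smul_eq_mul]
  rfl

theorem seSample_seInterp (hab : a < b) (hh : h ≠ 0) (n : ℕ) (c : Fin (2 * n + 1) → ℂ) :
    seSample hab.le n h (seInterp hab hh n c) = c := by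
  funext j
  have hj : ((j : ℕ) : ℤ) - n ∈ Finset.Icc (-(n : ℤ)) n := by
    have := j.isLt
    simp only [Finset.mem_Icc]
    omega
  simp only [seSample_apply, IccExtend_of_mem _ _ (Ioo_subset_Icc_self (psiSE_mem_Ioo hab _)),
    seInterp_apply, omegaF_psiSE hab hh _ hj, sub_left_inj, Nat.cast_inj, Fin.val_inj,
    apply_ite Complex.ofReal, Complex.ofReal_one, Complex.ofReal_zero, mul_ite, mul_one, mul_zero,
    Finset.sum_ite_eq', Finset.mem_univ, if_true]

theorem JmF_eq_seInterp (hab : a < b) (hh : h ≠ 0) (n : ℕ) (u : C(Icc a b, ℂ)) (x : Icc a b) :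
    JmF a b (psiSE a b) (psiSE' a b) (phiSE a b) n h (IccExtend hab.le u) x =
      seInterp hab hh n (AmF (psiSE' a b) n h *ᵥ seSample hab.le n h u) x := by
  rw [JmF, seInterp_apply, sum_Icc_neg_eq_sum_fin]
  refine Finset.sum_congr rfl fun i _ => ?_
  rw [sum_Icc_neg_eq_sum_fin, Finset.mul_sum]
  simp only [mulVec, dotProduct, AmF, of_apply, seSample_apply]
  push_cast
  congr 1
  refine Finset.sum_congr rfl fun j _ => ?_
  ring

end SESincIntegration

theorem stmt_11_general (a b : ℝ) (hab : a < b) (n : ℕ) (h : ℝ) (hh : 0 < h)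
    (z : ℂ) (hz : z ≠ 0) (v : C(Set.Icc a b, ℂ)) :
    (∃! u : C(Set.Icc a b, ℂ), ∀ x : Set.Icc a b,
        z * u x - JmF a b (psiSE a b) (psiSE' a b) (phiSE a b) n h
          (Set.IccExtend hab.le (⇑u)) (x : ℝ) = v x)
    ↔
    (∃! c : Fin (2*n+1) → ℂ,
        (z • (1 : Matrix (Fin (2*n+1)) (Fin (2*n+1)) ℂ) - AmF (psiSE' a b) n h).mulVec c
          = fun j : Fin (2*n+1) => Set.IccExtend hab.le (⇑v)
              (psiSE a b ((((((j : ℕ) : ℤ) - (n : ℤ)) : ℤ) : ℝ) * h))) := by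
  refine (existsUnique_congr fun u => ?_).trans
    (existsUnique_smul_sub_eq_iff_existsUnique_mulVec_eq (seSample hab.le n h)
      (seInterp hab hh.ne' n) (seSample_seInterp hab hh.ne' n) (AmF (psiSE' a b) n h) hz v)
  simp only [JmF_eq_seInterp hab hh.ne', ContinuousMap.ext_iff, ContinuousMap.sub_apply,
    ContinuousMap.smul_apply, smul_eq_mul]

/-- equivalence between unique solvability of
`z·u − 𝒥_m u = v` in `W = C([a,b],ℂ)` and unique solvability of the linear
system `(z·I_m − A_m) c = V_m v` in `ℂ^m`, for the SE-Sinc operators. -/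
theorem stmt_11 (a b : ℝ) (hab : a < b) (n : ℕ) (hn : 1 ≤ n) (h : ℝ) (hh : 0 < h)
    (z : ℂ) (hz : z ≠ 0) (v : C(Set.Icc a b, ℂ)) :
    (∃! u : C(Set.Icc a b, ℂ), ∀ x : Set.Icc a b,
        z * u x - JmF a b (psiSE a b) (psiSE' a b) (phiSE a b) n h
          (Set.IccExtend hab.le (⇑u)) (x : ℝ) = v x)
    ↔
    (∃! c : Fin (2*n+1) → ℂ,
        (z • (1 : Matrix (Fin (2*n+1)) (Fin (2*n+1)) ℂ) - AmF (psiSE' a b) n h).mulVec c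
          = fun j : Fin (2*n+1) => Set.IccExtend hab.le (⇑v)
              (psiSE a b ((((((j : ℕ) : ℤ) - (n : ℤ)) : ℤ) : ℝ) * h))) :=
  stmt_11_general a b hab n h hh z hz v
end

section
/- Let a < b be real numbers, let d > 0, let n be a positive integer, and set h = √(πd/n). Then h·Σ_{j=−n}^{n} ψ'(jh) ≤ √(πd)·(b−a)/4 + (b−a), where ψ'(u) = (b−a)/(4·cosh²(u/2)). -/
open MeasureTheory Set

private lemma sum_Icc_even (f : ℤ → ℝ) (hf : ∀ j : ℤ, f (-j) = f j) (n : ℕ) :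
    ∑ j ∈ Finset.Icc (-(n : ℤ)) (n : ℤ), f j
      = f 0 + 2 * ∑ j ∈ Finset.range n, f ((j : ℤ) + 1) := by
  induction n with
  | zero => simp
  | succ n ih =>
    have hset : Finset.Icc (-((n+1 : ℕ) : ℤ)) ((n+1 : ℕ) : ℤ)
        = insert (-((n+1 : ℕ) : ℤ)) (insert (((n+1 : ℕ) : ℤ))
            (Finset.Icc (-(n : ℤ)) (n : ℤ))) := by
      ext x
      simp only [Finset.mem_Icc, Finset.mem_insert]
      push_cast
      omega
    rw [hset, Finset.sum_insert, Finset.sum_insert, ih, Finset.sum_range_succ]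
    · have : f (-((n+1 : ℕ) : ℤ)) = f (((n+1 : ℕ) : ℤ)) := hf _
      push_cast at this ⊢
      rw [this]; ring
    · simp only [Finset.mem_Icc]; push_cast; omega
    · simp only [Finset.mem_insert, Finset.mem_Icc]; push_cast; omega

private lemma tanh_sub_ge (x y : ℝ) (hy : 0 ≤ y) (hxy : y ≤ x) :
    (x - y) / Real.cosh x ^ 2 ≤ Real.tanh x - Real.tanh y := by
  have hcx : 0 < Real.cosh x := Real.cosh_pos x
  have hcy : 0 < Real.cosh y := Real.cosh_pos y
  have hid : Real.tanh x - Real.tanh y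
      = Real.sinh (x - y) / (Real.cosh x * Real.cosh y) := by
    rw [Real.tanh_eq_sinh_div_cosh, Real.tanh_eq_sinh_div_cosh, Real.sinh_sub]
    field_simp
  rw [hid]
  have hnum : x - y ≤ Real.sinh (x - y) := Real.self_le_sinh_iff.mpr (by linarith)
  have hden : Real.cosh x * Real.cosh y ≤ Real.cosh x ^ 2 := by
    have : Real.cosh y ≤ Real.cosh x := by
      rw [Real.cosh_le_cosh]
      rw [abs_of_nonneg hy, abs_of_nonneg (le_trans hy hxy)]
      exact hxy
    nlinarith
  have hs0 : 0 ≤ Real.sinh (x - y) := by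
    rw [← Real.sinh_zero]
    exact Real.sinh_le_sinh.mpr (by linarith)
  exact div_le_div₀ hs0 hnum (by positivity) hden

/-- `h Σ_{j=-n}^{n} ψ'(jh) ≤ √(πd)·(b-a)/4 + (b-a)` for the SE
transformation with `h = √(πd/n)`. -/
theorem stmt_18 (a b : ℝ) (hab : a < b) (d : ℝ) (hd : 0 < d) (n : ℕ) (hn : 1 ≤ n) :
    Real.sqrt (Real.pi * d / n) *
        ∑ j ∈ Finset.Icc (-(n : ℤ)) (n : ℤ),
          psiSE' a b ((j : ℝ) * Real.sqrt (Real.pi * d / n))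
      ≤ Real.sqrt (Real.pi * d) * (b - a) / 4 + (b - a) := by
  set h : ℝ := Real.sqrt (Real.pi * d / n) with hh
  have hc : 0 < b - a := by linarith
  have hπd : 0 < Real.pi * d := by positivity
  have hh0 : 0 < h := Real.sqrt_pos.mpr (by positivity)
  have heven : ∀ j : ℤ, psiSE' a b ((-j : ℤ) * h) = psiSE' a b ((j : ℤ) * h) := by
    intro j
    simp [psiSE', neg_div, Real.cosh_neg, neg_mul, neg_div]
  rw [sum_Icc_even _ heven]
  have h0 : psiSE' a b ((0 : ℤ) * h) = (b - a) / 4 := by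
    simp [psiSE', Real.cosh_zero]
  have hkey : ∀ j ∈ Finset.range n,
      h * psiSE' a b (((j : ℤ) + 1 : ℤ) * h)
        ≤ (fun k : ℕ => (b - a)/2 * Real.tanh ((k:ℝ) * h / 2)) (j + 1)
          - (fun k : ℕ => (b - a)/2 * Real.tanh ((k:ℝ) * h / 2)) j := by
    intro j _
    simp only
    have hge := tanh_sub_ge (((j : ℝ) + 1) * h / 2) ((j : ℝ) * h / 2)
      (by positivity) (by nlinarith [hh0.le, (Nat.cast_nonneg j : (0:ℝ) ≤ j)])
    have hx : ((j : ℝ) + 1) * h / 2 - (j : ℝ) * h / 2 = h / 2 := by ring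
    rw [hx] at hge
    have hcosh : 0 < Real.cosh (((j : ℝ) + 1) * h / 2) := Real.cosh_pos _
    have heq : h * psiSE' a b (((j : ℝ) + 1) * h)
        = (b - a)/2 * ((h/2) / Real.cosh (((j : ℝ)+1) * h / 2) ^ 2) := by
      have hcne := hcosh.ne'
      simp only [psiSE']
      field_simp
      ring
    push_cast
    rw [heq]
    nlinarith [mul_le_mul_of_nonneg_left hge (by linarith : (0:ℝ) ≤ (b-a)/2)]
  have hsum : ∑ j ∈ Finset.range n, h * psiSE' a b (((j : ℤ) + 1 : ℤ) * h) ≤ (b - a)/2 := by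
    have htel := Finset.sum_range_sub (fun k : ℕ => (b - a)/2 * Real.tanh ((k:ℝ) * h / 2)) n
    have hle := Finset.sum_le_sum hkey
    rw [htel] at hle
    have h1 : Real.tanh ((n:ℝ) * h / 2) ≤ 1 := by
      rw [Real.tanh_eq_sinh_div_cosh]
      rw [div_le_one (Real.cosh_pos _)]
      have := Real.cosh_sub_sinh ((n:ℝ) * h / 2)
      have := Real.exp_pos (-((n:ℝ) * h / 2))
      linarith
    simp only [Nat.cast_zero, zero_mul, zero_div, Real.tanh_zero, mul_zero, sub_zero] at hle
    nlinarith
  have hhle : h ≤ Real.sqrt (Real.pi * d) := by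
    apply Real.sqrt_le_sqrt
    apply div_le_self hπd.le
    exact_mod_cast hn
  have hmuls : h * ∑ j ∈ Finset.range n, psiSE' a b (((j : ℤ) + 1 : ℤ) * h)
      = ∑ j ∈ Finset.range n, h * psiSE' a b (((j : ℤ) + 1 : ℤ) * h) := Finset.mul_sum _ _ _
  have expand : h * (psiSE' a b ((0 : ℤ) * h)
      + 2 * ∑ j ∈ Finset.range n, psiSE' a b (((j : ℤ) + 1 : ℤ) * h))
      = h * ((b - a)/4) + 2 * (h * ∑ j ∈ Finset.range n, psiSE' a b (((j : ℤ) + 1 : ℤ) * h)) := by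
    rw [h0]; ring
  push_cast at expand hmuls hsum ⊢
  rw [expand, hmuls]
  have t1 : h * ((b - a)/4) ≤ Real.sqrt (Real.pi * d) * (b - a) / 4 := by nlinarith
  nlinarith [hsum]
end

section
/- Let a < b be real numbers, let d > 0, and let n be a positive integer with 2dn > 1; set h = log(2dn)/n (so h > 0). Then h·Σ_{j=−n}^{n} ψ'(jh) ≤ (πd/(2e))·(b−a) + (b−a), where ψ'(u) = ((b−a)π/4)·cosh(u)/cosh²((π/2)·sinh u) and e is Euler's number. -/
/-!
The nodes `jh` are symmetric and `ψ'` is even and decreasing on `[0, ∞)`, so the sum is at most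
`h ψ'(0) + 2 ∫₀^{nh} ψ' = h ψ'(0) + 2 (ψ(nh) - ψ(0)) ≤ h (b - a) π / 4 + (b - a)`.
Finally `h = log(2dn)/n ≤ 2d/e` because `log x ≤ x / e`.
-/

open MeasureTheory Set

open Real Finset

theorem Finset.sum_Icc_neg_of_even {M : Type*} [AddCommMonoid M] {f : ℤ → M}
    (hf : ∀ j, f (-j) = f j) (n : ℕ) :
    ∑ j ∈ Icc (-(n : ℤ)) n, f j = f 0 + 2 • ∑ i ∈ range n, f (i + 1) := by
  induction n with
  | zero => simp
  | succ n ih =>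
    have hIcc : Icc (-((n + 1 : ℕ) : ℤ)) (n + 1 : ℕ)
        = insert (-((n : ℤ) + 1)) (insert ((n : ℤ) + 1) (Icc (-(n : ℤ)) n)) := by
      ext j; simp only [mem_Icc, mem_insert]; omega
    rw [hIcc, sum_insert (by simp only [mem_insert, mem_Icc]; omega), sum_insert (by simp),
      ih, sum_range_succ, hf]
    abel

theorem AntitoneOn.mul_sum_le_integral {f : ℝ → ℝ} {h : ℝ} (hh : 0 ≤ h) {n : ℕ}
    (hf : AntitoneOn f (Set.Icc 0 (n * h))) :
    h * ∑ i ∈ range n, f ((i + 1) * h) ≤ ∫ x in 0..n * h, f x := by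
  have hmem : ∀ x ∈ Set.Icc (0 : ℝ) (0 + n), x * h ∈ Set.Icc 0 (n * h) := fun x hx =>
    ⟨by nlinarith [hx.1], by nlinarith [hx.2]⟩
  have hg : AntitoneOn (fun x => f (x * h)) (Set.Icc 0 (0 + n)) := fun x hx y hy hxy =>
    hf (hmem x hx) (hmem y hy) (by gcongr)
  have := mul_le_mul_of_nonneg_left hg.sum_le_integral hh
  rw [intervalIntegral.mul_integral_comp_mul_right, zero_add, zero_mul] at this
  simpa using this

theorem mul_sum_Icc_le_integral_of_even {f : ℝ → ℝ} (hf : ∀ x, f (-x) = f x)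
    (hanti : AntitoneOn f (Set.Ici 0)) {h : ℝ} (hh : 0 ≤ h) (n : ℕ) :
    h * ∑ j ∈ Icc (-(n : ℤ)) n, f (j * h) ≤ h * f 0 + 2 * ∫ x in 0..n * h, f x := by
  rw [sum_Icc_neg_of_even (f := fun j : ℤ => f (j * h)) (fun j => by simp [neg_mul, hf]) n]
  have := (hanti.mono Set.Icc_subset_Ici_self).mul_sum_le_integral hh (n := n)
  push_cast
  simp only [zero_mul, nsmul_eq_mul, Nat.cast_ofNat]
  linarith

theorem Real.log_le_div_exp_one {x : ℝ} (hx : 0 < x) : log x ≤ x / exp 1 := by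
  have := log_le_sub_one_of_pos (div_pos hx (exp_pos 1))
  rw [log_div hx.ne' (exp_pos 1).ne', log_exp] at this
  linarith

theorem Real.hasDerivAt_tanh (x : ℝ) : HasDerivAt tanh (1 / cosh x ^ 2) x := by
  have := (hasDerivAt_sinh x).div (hasDerivAt_cosh x) (cosh_pos x).ne'
  rw [show sinh / cosh = tanh from funext fun y => (tanh_eq_sinh_div_cosh y).symm] at this
  refine this.congr_deriv ?_
  field_simp
  linarith [cosh_sq_sub_sinh_sq x]

theorem hasDerivAt_psiDE (a b u : ℝ) : HasDerivAt (psiDE a b) (psiDE' a b u) u := by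
  have := (((hasDerivAt_tanh _).comp u ((hasDerivAt_sinh u).const_mul (π / 2))).const_mul
    ((b - a) / 2)).add_const ((b + a) / 2)
  refine this.congr_deriv ?_
  rw [psiDE']
  ring

theorem hasDerivAt_psiDE' (a b u : ℝ) :
    HasDerivAt (psiDE' a b)
      ((b - a) * π / 4 * (sinh u * cosh (π / 2 * sinh u)
        - π * cosh u ^ 2 * sinh (π / 2 * sinh u)) / cosh (π / 2 * sinh u) ^ 3) u := by
  have hX : HasDerivAt (fun u => cosh (π / 2 * sinh u))
      (sinh (π / 2 * sinh u) * (π / 2 * cosh u)) u :=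
    (hasDerivAt_cosh _).comp u ((hasDerivAt_sinh u).const_mul _)
  have := ((hasDerivAt_cosh u).const_mul ((b - a) * π / 4)).div (hX.pow 2)
    (pow_pos (cosh_pos _) 2).ne'
  refine this.congr_deriv ?_
  have := (cosh_pos (π / 2 * sinh u)).ne'
  simp only [Pi.pow_apply]
  field_simp
  ring

theorem differentiable_psiDE' (a b : ℝ) : Differentiable ℝ (psiDE' a b) :=
  fun u => (hasDerivAt_psiDE' a b u).differentiableAt

-- With `s = sinh u` and `cosh² u = 1 + s²`, this is the sign condition `(ψ')'(u) ≤ 0`.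
theorem mul_cosh_pi_div_two_mul_le {s : ℝ} (hs : 0 ≤ s) :
    s * cosh (π / 2 * s) ≤ π * (1 + s ^ 2) * sinh (π / 2 * s) := by
  set X := π / 2 * s with hXdef
  have hX : 0 ≤ X := by positivity
  have hsinh : X ≤ sinh X := self_le_sinh_iff.mpr hX
  have hcosh : cosh X ≤ sinh X + 1 := by
    linarith [cosh_sub_sinh X, exp_le_one_iff.mpr (neg_nonpos.mpr hX)]
  have hquad : 2 ≤ π + π * s ^ 2 - s := by
    nlinarith [mul_nonneg (sub_nonneg.mpr pi_gt_three.le) (sq_nonneg s), sq_nonneg (s - 1),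
      pi_gt_three]
  have hcoef : 1 ≤ (π + π * s ^ 2 - s) * (π / 2) := by nlinarith [pi_gt_three]
  calc s * cosh X ≤ s * sinh X + s := by nlinarith [mul_le_mul_of_nonneg_left hcosh hs]
    _ ≤ s * sinh X + (π + π * s ^ 2 - s) * X := by
      rw [hXdef]; nlinarith [mul_le_mul_of_nonneg_right hcoef hs]
    _ ≤ s * sinh X + (π + π * s ^ 2 - s) * sinh X := by gcongr
    _ = π * (1 + s ^ 2) * sinh X := by ring

theorem antitoneOn_psiDE' {a b : ℝ} (hab : a ≤ b) : AntitoneOn (psiDE' a b) (Set.Ici 0) := by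
  refine antitoneOn_of_deriv_nonpos (convex_Ici 0)
    (differentiable_psiDE' a b).continuous.continuousOn
    (differentiable_psiDE' a b).differentiableOn fun u hu => ?_
  rw [interior_Ici] at hu
  have hs : 0 ≤ sinh u := sinh_nonneg_iff.mpr (le_of_lt hu)
  have key := mul_cosh_pi_div_two_mul_le hs
  rw [← cosh_sq' u] at key
  rw [(hasDerivAt_psiDE' a b u).deriv]
  apply div_nonpos_of_nonpos_of_nonneg _ (pow_pos (cosh_pos _) 3).le
  exact mul_nonpos_of_nonneg_of_nonpos (by have := pi_pos; positivity) (by linarith)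

theorem psiDE'_neg (a b u : ℝ) : psiDE' a b (-u) = psiDE' a b u := by
  simp [psiDE']

theorem psiDE'_zero (a b : ℝ) : psiDE' a b 0 = (b - a) * π / 4 := by
  simp [psiDE']

theorem integral_psiDE'_le {a b : ℝ} (hab : a ≤ b) (t : ℝ) :
    ∫ x in 0..t, psiDE' a b x ≤ (b - a) / 2 := by
  rw [intervalIntegral.integral_eq_sub_of_hasDerivAt (fun x _ => hasDerivAt_psiDE a b x)
    ((differentiable_psiDE' a b).continuous.intervalIntegrable _ _)]
  simp only [psiDE, sinh_zero, mul_zero, tanh_zero]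
  nlinarith [tanh_lt_one (π / 2 * sinh t)]

theorem stmt_19_general (a b : ℝ) (hab : a < b) (d : ℝ) (n : ℕ)
    (h2dn : 1 < 2 * d * n) :
    (Real.log (2 * d * n) / n) *
        ∑ j ∈ Finset.Icc (-(n : ℤ)) (n : ℤ),
          psiDE' a b ((j : ℝ) * (Real.log (2 * d * n) / n))
      ≤ Real.pi * d / (2 * Real.exp 1) * (b - a) + (b - a) := by
  have hn : (0 : ℝ) < n := Nat.cast_pos.mpr (Nat.pos_of_ne_zero (by rintro rfl; norm_num at h2dn))
  set h := Real.log (2 * d * n) / n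
  have hh : 0 ≤ h := div_nonneg (log_pos h2dn).le hn.le
  have hh_le : h ≤ 2 * d / exp 1 :=
    calc h ≤ 2 * d * n / exp 1 / n :=
          div_le_div_of_nonneg_right (log_le_div_exp_one (by linarith)) hn.le
      _ = 2 * d / exp 1 := by field_simp
  calc h * ∑ j ∈ Icc (-(n : ℤ)) n, psiDE' a b (j * h)
      ≤ h * psiDE' a b 0 + 2 * ∫ x in 0..n * h, psiDE' a b x :=
        mul_sum_Icc_le_integral_of_even (psiDE'_neg a b) (antitoneOn_psiDE' hab.le) hh n
    _ ≤ 2 * d / exp 1 * ((b - a) * π / 4) + 2 * ((b - a) / 2) := by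
        rw [psiDE'_zero]
        gcongr
        exact integral_psiDE'_le hab.le _
    _ = π * d / (2 * exp 1) * (b - a) + (b - a) := by field_simp; ring

/-- `h Σ_{j=-n}^{n} ψ'(jh) ≤ (πd/(2e))·(b-a) + (b-a)` for the DE
transformation with `h = log(2dn)/n`. -/
theorem stmt_19 (a b : ℝ) (hab : a < b) (d : ℝ) (hd : 0 < d) (n : ℕ) (hn : 1 ≤ n)
    (h2dn : 1 < 2 * d * n) :
    (Real.log (2 * d * n) / n) *
        ∑ j ∈ Finset.Icc (-(n : ℤ)) (n : ℤ),
          psiDE' a b ((j : ℝ) * (Real.log (2 * d * n) / n))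
      ≤ Real.pi * d / (2 * Real.exp 1) * (b - a) + (b - a) :=
  stmt_19_general a b hab d n h2dn
end
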